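/- arXiv:2511.14862 — 8 statements merged into one kernel-verified Lean document; each statement's English description precedes it below -/
import Mathlib

section
/- Let G = (U, α) and H = (V, β) be two connected weighted graphs. Then any weight function γ on U × V that satisfies the transition coupling condition with respect to α and β also satisfies the marginal coupling condition; in particular, γ is a weight joining of α and β. -/
/-!
Write `p` for the marginal of `α` and `R u = ∑ v, r_γ (u, v)` for the first marginal of `r_γ`.
Summing the first transition condition over `v` gives `p u * Γ u u' = α u u' * R u`, where
`Γ u u' = ∑ v v', γ (u, v) (u', v')` is symmetric. Comparing this with the same identity for
`(u', u)` shows that `R / p` takes the same value at the two ends of every edge of positive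
weight, so by connectedness `R = c • p`, and `c = 1` because both have total mass `1`.
The second marginal is handled in the same way.
-/

open Finset

def IsWeightFunction {U : Type*} [Fintype U] (α : U → U → ℝ) : Prop :=
  (∀ u u', 0 ≤ α u u') ∧ (∀ u u', α u u' = α u' u) ∧ (∑ u, ∑ u', α u u' = 1)

noncomputable def marginal {U : Type*} [Fintype U] (α : U → U → ℝ) (u : U) : ℝ :=
  ∑ u', α u u'

def IsWeightJoining {U V : Type*} [Fintype U] [Fintype V]
    (α : U → U → ℝ) (β : V → V → ℝ) (γ : U × V → U × V → ℝ) : Prop :=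
  IsWeightFunction γ ∧
  (∀ u, ∑ v, marginal γ (u, v) = marginal α u) ∧
  (∀ v, ∑ u, marginal γ (u, v) = marginal β v) ∧
  (∀ u u' v, marginal α u * ∑ v', γ (u, v) (u', v') = α u u' * marginal γ (u, v)) ∧
  (∀ v v' u, marginal β v * ∑ u', γ (u, v) (u', v') = β v v' * marginal γ (u, v))

/-- A weighted graph `(U, α)` is connected if any two distinct vertices are joined by
a path of positive-weight edges. -/
def IsConnectedWeight {U : Type*} [Fintype U] (α : U → U → ℝ) : Prop :=
  ∀ u u' : U, u ≠ u' → ∃ n, ∃ w : Fin (n + 1) → U, w 0 = u ∧ w (Fin.last n) = u' ∧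
    ∀ i : Fin n, 0 < α (w i.castSucc) (w i.succ)

namespace IsConnectedWeight

variable {U : Type*} [Fintype U] {α : U → U → ℝ}

theorem apply_eq_of_forall_pos {X : Sort*} (hconn : IsConnectedWeight α) {f : U → X}
    (hf : ∀ a b, 0 < α a b → f a = f b) (u u' : U) : f u = f u' := by
  by_cases h : u = u'
  · rw [h]
  obtain ⟨n, w, rfl, rfl, hw⟩ := hconn u u' h
  have along_path : ∀ i, f (w 0) = f (w i) := by
    intro i
    induction i using Fin.induction with
    | zero => rfl
    | succ j ih => exact ih.trans (hf _ _ (hw j))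
  exact along_path _

theorem marginal_pos (hconn : IsConnectedWeight α) (hα : IsWeightFunction α) (u : U) :
    0 < marginal α u := by
  obtain ⟨hnn, hsymm, hsum⟩ := hα
  have le_marginal : ∀ a b, α a b ≤ marginal α a :=
    fun a b => single_le_sum (fun b _ => hnn a b) (mem_univ b)
  obtain ⟨u₀, hu₀⟩ : ∃ u₀, 0 < marginal α u₀ := by
    by_contra! h
    have hmass : ∑ a, marginal α a = 1 := hsum
    linarith [sum_nonpos fun a (_ : a ∈ univ) => h a]
  have propagate : ∀ a b, 0 < α a b → (0 < marginal α a) = (0 < marginal α b) :=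
    fun a b hab => propext ⟨fun _ => (hsymm a b ▸ hab).trans_le (le_marginal b a),
      fun _ => hab.trans_le (le_marginal a b)⟩
  exact hconn.apply_eq_of_forall_pos propagate u₀ u ▸ hu₀

theorem eq_marginal_of_marginal_mul_eq (hconn : IsConnectedWeight α) (hα : IsWeightFunction α)
    {Γ : U → U → ℝ} (hΓ : ∀ u u', Γ u u' = Γ u' u) {R : U → ℝ} (hR : ∑ u, R u = 1)
    (h : ∀ u u', marginal α u * Γ u u' = α u u' * R u) : R = marginal α := by
  have hp := hconn.marginal_pos hα
  have ratio_eq : ∀ a b, 0 < α a b → R a / marginal α a = Γ a b / α a b := by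
    intro a b hab
    rw [div_eq_div_iff (hp a).ne' hab.ne']
    linarith [h a b]
  have ratio_const : ∀ u u', R u / marginal α u = R u' / marginal α u' :=
    hconn.apply_eq_of_forall_pos fun a b hab => by
      rw [ratio_eq a b hab, ratio_eq b a (hα.2.1 a b ▸ hab), hΓ, hα.2.1]
  funext u
  calc R u = R u * ∑ u', marginal α u' := by
        rw [show ∑ u', marginal α u' = 1 from hα.2.2, mul_one]
    _ = (∑ u', R u') * marginal α u := by
      rw [mul_sum, sum_mul]
      exact sum_congr rfl fun u' _ =>
        (div_eq_div_iff (hp u).ne' (hp u').ne').mp (ratio_const u u')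
    _ = marginal α u := by rw [hR, one_mul]

end IsConnectedWeight

/-- For connected weighted graphs `G = (U, α)` and `H = (V, β)`,
any weight function `γ` on `U × V` satisfying the transition coupling condition
also satisfies the marginal coupling condition; in particular it is a weight joining. -/
theorem transition_coupling_implies_marginal_coupling
    {U V : Type*} [Fintype U] [Fintype V]
    (α : U → U → ℝ) (β : V → V → ℝ)
    (hα : IsWeightFunction α) (hβ : IsWeightFunction β)
    (hGconn : IsConnectedWeight α) (hHconn : IsConnectedWeight β)
    (γ : U × V → U × V → ℝ) (hγ : IsWeightFunction γ)
    (htrans₁ : ∀ u u' v, marginal α u * ∑ v', γ (u, v) (u', v') =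
      α u u' * marginal γ (u, v))
    (htrans₂ : ∀ v v' u, marginal β v * ∑ u', γ (u, v) (u', v') =
      β v v' * marginal γ (u, v)) :
    ((∀ u, ∑ v, marginal γ (u, v) = marginal α u) ∧
     (∀ v, ∑ u, marginal γ (u, v) = marginal β v)) ∧
    IsWeightJoining α β γ := by
  have hmass : ∑ x : U × V, marginal γ x = 1 := hγ.2.2
  have hU : (fun u => ∑ v, marginal γ (u, v)) = marginal α := by
    refine hGconn.eq_marginal_of_marginal_mul_eq hα
      (Γ := fun u u' => ∑ v, ∑ v', γ (u, v) (u', v')) (fun u u' => ?_)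
      (by rw [← hmass, Fintype.sum_prod_type]) (fun u u' => ?_)
    · rw [sum_comm]; simp only [hγ.2.1 (u, _)]
    · rw [mul_sum, mul_sum]; exact sum_congr rfl fun v _ => htrans₁ u u' v
  have hV : (fun v => ∑ u, marginal γ (u, v)) = marginal β := by
    refine hHconn.eq_marginal_of_marginal_mul_eq hβ
      (Γ := fun v v' => ∑ u, ∑ u', γ (u, v) (u', v')) (fun v v' => ?_)
      (by rw [← hmass, Fintype.sum_prod_type_right]) (fun v v' => ?_)
    · rw [sum_comm]; simp only [hγ.2.1 (_, v)]
    · rw [mul_sum, mul_sum]; exact sum_congr rfl fun u _ => htrans₂ v v' u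
  have hmarg := And.intro (congrFun hU) (congrFun hV)
  exact ⟨hmarg, hγ, hmarg.1, hmarg.2, htrans₁, htrans₂⟩
end

section
/- Let G = (U,α) and H = (V,β) be two fully supported weighted graphs, with connected components G = ⊔_{i=1}^k G_i and H = ⊔_{j=1}^l H_j, where G_i = (U_i, α_i) and H_j = (V_j, β_j) are the normalized connected component graphs. Then for any weight joining γ ∈ J(α,β) there exists a coupling π of the probability vectors ν_G = (S_{G_1},…,S_{G_k}) and ν_H = (S_{H_1},…,S_{H_l}) (i.e., a nonnegative k × l matrix with row sums ν_G and column sums ν_H) together with weight functions γ_{ij} on U × V such that supp(γ_{ij}) ⊆ (U_i × V_j)², the restriction of γ_{ij} to (U_i × V_j)² is a weight joining of α_i and β_j, and γ = ∑_{i=1}^k ∑_{j=1}^l π_{ij} · γ_{ij}. -/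
open Finset

def weightJoinings {U V : Type*} [Fintype U] [Fintype V]
    (α : U → U → ℝ) (β : V → V → ℝ) : Set (U × V → U × V → ℝ) :=
  {γ | IsWeightJoining α β γ}

noncomputable def ogjCost {U V : Type*} [Fintype U] [Fintype V]
    (c : U → V → ℝ) (γ : U × V → U × V → ℝ) : ℝ :=
  ∑ p : U × V, c p.1 p.2 * marginal γ p

section helpers
variable {U V : Type*} [Fintype U] [Fintype V] {k l : ℕ}

lemma sum_subtype_ite (p : U → Prop) [DecidablePred p] (f : U → ℝ) :
    ∑ u : {u // p u}, f u.1 = ∑ u : U, if p u then f u else 0 := by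
  rw [← Finset.sum_filter]
  exact (Finset.sum_subtype _ (by simp) f).symm

lemma sum_subtype_prod (P : U → Prop) (Q : V → Prop) [DecidablePred P] [DecidablePred Q]
    (f : U → V → ℝ) :
    ∑ x : {u // P u} × {v // Q v}, f x.1.1 x.2.1
      = ∑ u, ∑ v, if P u ∧ Q v then f u v else 0 := by
  rw [Fintype.sum_prod_type]
  rw [show (∑ x : {u // P u}, ∑ y : {v // Q v}, f x.1 y.1)
      = ∑ x : {u // P u}, (fun u => ∑ y : {v // Q v}, f u y.1) x.1 from rfl]
  rw [sum_subtype_ite P (fun u => ∑ y : {v // Q v}, f u y.1)]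
  refine Finset.sum_congr rfl fun u _ => ?_
  by_cases h : P u
  · simp only [h, if_true, true_and]
    exact sum_subtype_ite Q (f u)
  · simp [h]

lemma sum_prod_factor (F : U → U → ℝ) (G : V → V → ℝ) :
    ∑ x : U × V, ∑ y : U × V, F x.1 y.1 * G x.2 y.2
      = (∑ u, ∑ u', F u u') * (∑ v, ∑ v', G v v') := by
  rw [Finset.sum_mul_sum]
  rw [Fintype.sum_prod_type]
  refine Finset.sum_congr rfl fun u _ => ?_
  refine Finset.sum_congr rfl fun v _ => ?_
  rw [Fintype.sum_prod_type, Finset.sum_mul_sum]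

lemma path_const {g : U → ℝ} {R : U → U → Prop}
    (h : ∀ u u', R u u' → g u = g u') :
    ∀ n (w : Fin (n + 1) → U), (∀ i : Fin n, R (w i.castSucc) (w i.succ)) →
      g (w 0) = g (w (Fin.last n)) := by
  intro n
  induction n with
  | zero => intro w _; rfl
  | succ n ih =>
    intro w hw
    have h1 := ih (fun i => w i.castSucc)
      (fun i => by have := hw i.castSucc; rw [Fin.succ_castSucc] at this; exact this)
    have h2 := h _ _ (hw (Fin.last n))
    simp only [Fin.succ_last] at h2
    simpa [Fin.castSucc_zero] using h1.trans h2

lemma marginal_swap (γ : U × V → U × V → ℝ) (v : V) (u : U) :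
    marginal (fun (x y : V × U) => γ (x.2, x.1) (y.2, y.1)) (v, u) = marginal γ (u, v) := by
  unfold marginal
  rw [Fintype.sum_prod_type, Finset.sum_comm, ← Fintype.sum_prod_type]

lemma swap_joining (α : U → U → ℝ) (β : V → V → ℝ) (γ : U × V → U × V → ℝ)
    (hγ : IsWeightJoining α β γ) :
    IsWeightJoining β α (fun x y => γ (x.2, x.1) (y.2, y.1)) := by
  obtain ⟨⟨h0, hs, h1⟩, hU, hV, htU, htV⟩ := hγ
  refine ⟨⟨fun x y => h0 _ _, fun x y => hs _ _, ?_⟩, ?_, ?_, ?_, ?_⟩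
  · rw [show (∑ x : V × U, ∑ y : V × U, γ (x.2, x.1) (y.2, y.1))
        = ∑ x : V × U, marginal γ (x.2, x.1) from
      Finset.sum_congr rfl fun x _ => marginal_swap γ x.1 x.2]
    rw [Fintype.sum_prod_type, Finset.sum_comm, ← Fintype.sum_prod_type]
    exact h1
  · intro v; simp only [marginal_swap]; exact hV v
  · intro u; simp only [marginal_swap]; exact hU u
  · intro v v' u; simp only [marginal_swap]; exact htV v v' u
  · intro u u' v; simp only [marginal_swap]; exact htU u u' v

lemma joining_support (α : U → U → ℝ) (β : V → V → ℝ)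
    (hα : IsWeightFunction α) (hβ : IsWeightFunction β)
    (hαfull : ∀ u, 0 < marginal α u) (hβfull : ∀ v, 0 < marginal β v)
    (γ : U × V → U × V → ℝ) (hγ : IsWeightJoining α β γ) :
    ∀ u v u' v', γ (u, v) (u', v') ≠ 0 → 0 < α u u' ∧ 0 < β v v' := by
  obtain ⟨⟨h0, hs, h1⟩, hU, hV, htU, htV⟩ := hγ
  intro u v u' v' hne
  constructor
  · by_contra hcon
    have hz : α u u' = 0 := le_antisymm (not_lt.mp hcon) (hα.1 u u')
    have h2 := htU u u' v
    rw [hz, zero_mul] at h2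
    have hsum : ∑ v', γ (u, v) (u', v') = 0 := by
      rcases mul_eq_zero.mp h2 with h | h
      · exact absurd h (hαfull u).ne'
      · exact h
    exact hne ((Finset.sum_eq_zero_iff_of_nonneg (fun x _ => h0 _ _)).mp hsum v' (mem_univ _))
  · by_contra hcon
    have hz : β v v' = 0 := le_antisymm (not_lt.mp hcon) (hβ.1 v v')
    have h2 := htV v v' u
    rw [hz, zero_mul] at h2
    have hsum : ∑ u', γ (u, v) (u', v') = 0 := by
      rcases mul_eq_zero.mp h2 with h | h
      · exact absurd h (hβfull v).ne'
      · exact h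
    exact hne ((Finset.sum_eq_zero_iff_of_nonneg (fun x _ => h0 _ _)).mp hsum u' (mem_univ _))

/-- collapse an indicator on the fiber when summing a weight function row
starting in that fiber -/
lemma sum_ite_fiber {α : U → U → ℝ} {cu : U → Fin k}
    (hα0 : ∀ a b, 0 ≤ α a b) (hedge : ∀ a b, 0 < α a b → cu a = cu b)
    {i : Fin k} {u : U} (hu : cu u = i) :
    ∑ u', (if cu u' = i then α u u' else 0) = marginal α u := by
  unfold marginal
  refine Finset.sum_congr rfl fun u' _ => ?_
  by_cases h : cu u' = i
  · simp [h]
  · have hz : α u u' = 0 := by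
      by_contra hne
      exact h ((hedge u u' ((hα0 u u').lt_of_ne (Ne.symm hne))).symm.trans hu)
    simp [h, hz]

end helpers

section fiber
variable {U V : Type*} [Fintype U] [Fintype V] {k l : ℕ}

lemma fiber_marginal
    (α : U → U → ℝ) (β : V → V → ℝ)
    (hα : IsWeightFunction α) (hβ : IsWeightFunction β)
    (hαfull : ∀ u, 0 < marginal α u) (hβfull : ∀ v, 0 < marginal β v)
    (cu : U → Fin k) (cv : V → Fin l)
    (hcv_edge : ∀ v v', 0 < β v v' → cv v = cv v')
    (hcu_conn : ∀ u u', cu u = cu u' → u ≠ u' →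
      ∃ n, ∃ w : Fin (n + 1) → U, w 0 = u ∧ w (Fin.last n) = u' ∧
        ∀ i : Fin n, 0 < α (w i.castSucc) (w i.succ))
    (γ : U × V → U × V → ℝ) (hγ : IsWeightJoining α β γ)
    (i : Fin k) (j : Fin l) (u : U) (hu : cu u = i) :
    (∑ v, if cv v = j then marginal γ (u, v) else 0)
        * (∑ x, if cu x = i then marginal α x else 0)
      = (∑ x : U × V, if cu x.1 = i ∧ cv x.2 = j then marginal γ x else 0)
        * marginal α u := by
  classical
  obtain ⟨⟨hγ0, hγs, hγ1⟩, hγU, hγV, hγtU, hγtV⟩ := hγ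
  have hsupp := joining_support α β hα hβ hαfull hβfull γ
    ⟨⟨hγ0, hγs, hγ1⟩, hγU, hγV, hγtU, hγtV⟩
  set fj : U → ℝ := fun u => ∑ v, if cv v = j then marginal γ (u, v) else 0 with hfj
  have hswitch : ∀ u u', (∑ v, ∑ v', if cv v = j then γ (u, v) (u', v') else 0)
      = ∑ v, ∑ v', if cv v' = j then γ (u, v) (u', v') else 0 := by
    intro u u'
    refine Finset.sum_congr rfl fun v _ => Finset.sum_congr rfl fun v' _ => ?_
    by_cases hz : γ (u, v) (u', v') = 0
    · simp [hz]
    · rw [hcv_edge v v' (hsupp u v u' v' hz).2]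
  have hA : ∀ u u', α u u' * fj u
      = marginal α u * ∑ v', if cv v' = j then ∑ v, γ (u', v') (u, v) else 0 := by
    intro u u'
    calc α u u' * fj u = ∑ v, if cv v = j then α u u' * marginal γ (u, v) else 0 := by
          rw [hfj, Finset.mul_sum]
          exact Finset.sum_congr rfl fun v _ => by rw [mul_ite, mul_zero]
      _ = ∑ v, if cv v = j then marginal α u * ∑ v', γ (u, v) (u', v') else 0 := by
          exact Finset.sum_congr rfl fun v _ => by rw [← hγtU u u' v]
      _ = marginal α u * ∑ v, ∑ v', if cv v = j then γ (u, v) (u', v') else 0 := by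
          rw [Finset.mul_sum]
          refine Finset.sum_congr rfl fun v _ => ?_
          by_cases h : cv v = j <;> simp [h, Finset.mul_sum]
      _ = marginal α u * ∑ v', ∑ v, if cv v' = j then γ (u', v') (u, v) else 0 := by
          rw [hswitch, Finset.sum_comm]
          congr 1
          exact Finset.sum_congr rfl fun v' _ => Finset.sum_congr rfl fun v _ => by
            rw [hγs (u, v) (u', v')]
      _ = marginal α u * ∑ v', if cv v' = j then ∑ v, γ (u', v') (u, v) else 0 := by
          congr 1
          refine Finset.sum_congr rfl fun v' _ => ?_
          by_cases h : cv v' = j <;> simp [h]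
  have hB : ∀ u u', marginal α u' * (∑ v', if cv v' = j then ∑ v, γ (u', v') (u, v) else 0)
      = α u' u * fj u' := by
    intro u u'
    rw [hfj, Finset.mul_sum, Finset.mul_sum]
    refine Finset.sum_congr rfl fun v' _ => ?_
    by_cases h : cv v' = j
    · simp only [h, if_true]
      exact hγtU u' u v'
    · simp [h]
  have hedge : ∀ u u', 0 < α u u' → fj u * marginal α u' = fj u' * marginal α u := by
    intro u u' hpos
    have key : marginal α u' * (α u u' * fj u) = marginal α u * (α u' u * fj u') := by
      rw [hA u u', ← hB u u']
      ring
    rw [hα.2.1 u' u] at key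
    have h2 : α u u' * (fj u * marginal α u') = α u u' * (fj u' * marginal α u) := by
      linarith [key]
    exact mul_left_cancel₀ hpos.ne' h2
  have hconst : ∀ u u', cu u = cu u' → fj u * marginal α u' = fj u' * marginal α u := by
    intro a b hab
    by_cases heq : a = b
    · rw [heq]
    · obtain ⟨n, w, hw0, hwl, hwe⟩ := hcu_conn a b hab heq
      have hg : ∀ x y, 0 < α x y →
          (fun u => fj u / marginal α u) x = (fun u => fj u / marginal α u) y := by
        intro x y hxy
        exact div_eq_div_iff (hαfull x).ne' (hαfull y).ne' |>.mpr (hedge x y hxy)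
      have h3 := path_const hg n w hwe
      rw [hw0, hwl] at h3
      exact (div_eq_div_iff (hαfull a).ne' (hαfull b).ne').mp h3
  have hPi : (∑ x : U × V, if cu x.1 = i ∧ cv x.2 = j then marginal γ x else 0)
      = ∑ u', if cu u' = i then fj u' else 0 := by
    rw [Fintype.sum_prod_type]
    refine Finset.sum_congr rfl fun u' _ => ?_
    by_cases h : cu u' = i <;> simp [h, hfj]
  rw [hPi, Finset.mul_sum, Finset.sum_mul]
  refine Finset.sum_congr rfl fun u' _ => ?_
  by_cases h : cu u' = i
  · simp only [h, if_true]
    exact hconst u u' (by rw [hu, h])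
  · simp [h]

end fiber

section product
variable {U V : Type*} [Fintype U] [Fintype V] {k l : ℕ}

lemma product_is_joining {A B : Type*} [Fintype A] [Fintype B]
    (a : A → A → ℝ) (b : B → B → ℝ)
    (ha : IsWeightFunction a) (hb : IsWeightFunction b) :
    IsWeightJoining a b (fun p q => a p.1 q.1 * b p.2 q.2) := by
  have hm : ∀ p : A × B, marginal (fun (p q : A × B) => a p.1 q.1 * b p.2 q.2) p
      = marginal a p.1 * marginal b p.2 := by
    intro p
    unfold marginal
    rw [Fintype.sum_prod_type]
    calc (∑ x, ∑ y, a p.1 x * b p.2 y) = ∑ x, a p.1 x * ∑ y, b p.2 y :=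
          Finset.sum_congr rfl fun x _ => (Finset.mul_sum _ _ _).symm
      _ = (∑ x, a p.1 x) * ∑ y, b p.2 y := by rw [Finset.sum_mul]
  have hma : ∑ u, marginal a u = 1 := ha.2.2
  have hmb : ∑ v, marginal b v = 1 := hb.2.2
  refine ⟨⟨fun p q => mul_nonneg (ha.1 _ _) (hb.1 _ _),
    fun p q => by dsimp only; rw [ha.2.1 p.1 q.1, hb.2.1 p.2 q.2], ?_⟩, ?_, ?_, ?_, ?_⟩
  · calc (∑ p : A × B, ∑ q : A × B, a p.1 q.1 * b p.2 q.2)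
        = (∑ u, ∑ u', a u u') * (∑ v, ∑ v', b v v') := sum_prod_factor a b
      _ = 1 := by rw [ha.2.2, hb.2.2, mul_one]
  · intro u
    simp only [hm]
    calc (∑ v, marginal a u * marginal b v) = marginal a u * ∑ v, marginal b v :=
          (Finset.mul_sum _ _ _).symm
      _ = marginal a u := by rw [hmb, mul_one]
  · intro v
    simp only [hm]
    calc (∑ u, marginal a u * marginal b v) = (∑ u, marginal a u) * marginal b v :=
          (Finset.sum_mul _ _ _).symm
      _ = marginal b v := by rw [hma, one_mul]
  · intro u u' v
    simp only [hm]
    rw [← Finset.mul_sum]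
    unfold marginal
    ring
  · intro v v' u
    simp only [hm]
    rw [← Finset.sum_mul]
    unfold marginal
    ring

lemma subtype_weight_fn (α : U → U → ℝ) (hα : IsWeightFunction α)
    (cu : U → Fin k) (hcu_edge : ∀ u u', 0 < α u u' → cu u = cu u')
    (i : Fin k) (u0 : U) (hu0 : cu u0 = i)
    (hαfull : ∀ u, 0 < marginal α u) :
    IsWeightFunction (fun (u u' : {u : U // cu u = i}) =>
      α u.1 u'.1 / (∑ x : U, if cu x = i then marginal α x else 0)) := by
  classical
  have hSU : 0 < ∑ x : U, if cu x = i then marginal α x else 0 := by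
    refine Finset.sum_pos' (fun u _ => ?_) ⟨u0, mem_univ _, ?_⟩
    · by_cases h : cu u = i <;> simp [h, (hαfull u).le]
    · simp [hu0, hαfull u0]
  have hαsub : ∀ us : {u : U // cu u = i}, (∑ us' : {u : U // cu u = i}, α us.1 us'.1)
      = marginal α us.1 := by
    intro us
    rw [sum_subtype_ite (fun u => cu u = i) (fun u' => α us.1 u')]
    exact sum_ite_fiber hα.1 hcu_edge us.2
  have hSUsub : (∑ us : {u : U // cu u = i}, marginal α us.1)
      = ∑ x : U, if cu x = i then marginal α x else 0 :=
    sum_subtype_ite (fun u => cu u = i) (fun u => marginal α u)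
  refine ⟨fun u u' => div_nonneg (hα.1 _ _) hSU.le,
    fun u u' => by dsimp only; rw [hα.2.1 u.1 u'.1], ?_⟩
  calc (∑ us : {u : U // cu u = i}, ∑ us' : {u : U // cu u = i},
        α us.1 us'.1 / (∑ x : U, if cu x = i then marginal α x else 0))
      = ∑ us : {u : U // cu u = i},
          marginal α us.1 / (∑ x : U, if cu x = i then marginal α x else 0) := by
        refine Finset.sum_congr rfl fun us _ => ?_
        rw [← Finset.sum_div, hαsub us]
    _ = (∑ us : {u : U // cu u = i}, marginal α us.1)
          / (∑ x : U, if cu x = i then marginal α x else 0) := by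
        rw [← Finset.sum_div]
    _ = 1 := by rw [hSUsub]; exact div_self hSU.ne'

lemma product_component
    (α : U → U → ℝ) (β : V → V → ℝ)
    (hα : IsWeightFunction α) (hβ : IsWeightFunction β)
    (hαfull : ∀ u, 0 < marginal α u) (hβfull : ∀ v, 0 < marginal β v)
    (cu : U → Fin k) (cv : V → Fin l)
    (hcu_edge : ∀ u u', 0 < α u u' → cu u = cu u')
    (hcv_edge : ∀ v v', 0 < β v v' → cv v = cv v')
    (i : Fin k) (j : Fin l) (u0 : U) (hu0 : cu u0 = i) (v0 : V) (hv0 : cv v0 = j) :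
    IsWeightFunction (fun (x y : U × V) =>
      (if cu x.1 = i ∧ cu y.1 = i then α x.1 y.1 else 0) *
      (if cv x.2 = j ∧ cv y.2 = j then β x.2 y.2 else 0) /
      ((∑ x, if cu x = i then marginal α x else 0) *
        (∑ y, if cv y = j then marginal β y else 0))) ∧
    (∀ x y : U × V, 0 < (if cu x.1 = i ∧ cu y.1 = i then α x.1 y.1 else 0) *
      (if cv x.2 = j ∧ cv y.2 = j then β x.2 y.2 else 0) /
      ((∑ x, if cu x = i then marginal α x else 0) *
        (∑ y, if cv y = j then marginal β y else 0)) →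
      cu x.1 = i ∧ cv x.2 = j ∧ cu y.1 = i ∧ cv y.2 = j) ∧
    IsWeightJoining
      (fun (u u' : {u : U // cu u = i}) =>
        α u.1 u'.1 / (∑ x : U, if cu x = i then marginal α x else 0))
      (fun (v v' : {v : V // cv v = j}) =>
        β v.1 v'.1 / (∑ y : V, if cv y = j then marginal β y else 0))
      (fun (p q : {u : U // cu u = i} × {v : V // cv v = j}) =>
        (if cu (p.1.1, p.2.1).1 = i ∧ cu (q.1.1, q.2.1).1 = i
            then α (p.1.1, p.2.1).1 (q.1.1, q.2.1).1 else 0) *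
        (if cv (p.1.1, p.2.1).2 = j ∧ cv (q.1.1, q.2.1).2 = j
            then β (p.1.1, p.2.1).2 (q.1.1, q.2.1).2 else 0) /
        ((∑ x, if cu x = i then marginal α x else 0) *
          (∑ y, if cv y = j then marginal β y else 0))) := by
  classical
  have hSU : 0 < ∑ x : U, if cu x = i then marginal α x else 0 := by
    refine Finset.sum_pos' (fun u _ => ?_) ⟨u0, mem_univ _, ?_⟩
    · by_cases h : cu u = i <;> simp [h, (hαfull u).le]
    · simp [hu0, hαfull u0]
  have hSV : 0 < ∑ y : V, if cv y = j then marginal β y else 0 := by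
    refine Finset.sum_pos' (fun v _ => ?_) ⟨v0, mem_univ _, ?_⟩
    · by_cases h : cv v = j <;> simp [h, (hβfull v).le]
    · simp [hv0, hβfull v0]
  have hAfib : ∀ u, cu u = i → ∑ u', (if cu u' = i then α u u' else 0) = marginal α u :=
    fun u hu => sum_ite_fiber hα.1 hcu_edge hu
  have hBfib : ∀ v, cv v = j → ∑ v', (if cv v' = j then β v v' else 0) = marginal β v :=
    fun v hv => sum_ite_fiber hβ.1 hcv_edge hv
  have hAsum : ∑ u, ∑ u', (if cu u = i ∧ cu u' = i then α u u' else 0)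
      = ∑ x : U, if cu x = i then marginal α x else 0 := by
    refine Finset.sum_congr rfl fun u _ => ?_
    by_cases h : cu u = i
    · simp only [h, true_and, if_true]
      exact hAfib u h
    · simp [h]
  have hBsum : ∑ v, ∑ v', (if cv v = j ∧ cv v' = j then β v v' else 0)
      = ∑ y : V, if cv y = j then marginal β y else 0 := by
    refine Finset.sum_congr rfl fun v _ => ?_
    by_cases h : cv v = j
    · simp only [h, true_and, if_true]
      exact hBfib v h
    · simp [h]
  refine ⟨⟨fun x y => ?_, fun x y => ?_, ?_⟩, fun x y hpos => ?_, ?_⟩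
  · apply div_nonneg _ (mul_pos hSU hSV).le
    apply mul_nonneg <;> split_ifs <;> first | exact hα.1 _ _ | exact hβ.1 _ _ | rfl
  · have e1 : (if cu x.1 = i ∧ cu y.1 = i then α x.1 y.1 else 0)
        = (if cu y.1 = i ∧ cu x.1 = i then α y.1 x.1 else 0) := by
      by_cases h : cu x.1 = i ∧ cu y.1 = i
      · rw [if_pos h, if_pos ⟨h.2, h.1⟩, hα.2.1]
      · rw [if_neg h, if_neg fun hc => h ⟨hc.2, hc.1⟩]
    have e2 : (if cv x.2 = j ∧ cv y.2 = j then β x.2 y.2 else 0)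
        = (if cv y.2 = j ∧ cv x.2 = j then β y.2 x.2 else 0) := by
      by_cases h : cv x.2 = j ∧ cv y.2 = j
      · rw [if_pos h, if_pos ⟨h.2, h.1⟩, hβ.2.1]
      · rw [if_neg h, if_neg fun hc => h ⟨hc.2, hc.1⟩]
    simp only [e1, e2]
  · have e3 : ∀ x y : U × V,
        (if cu x.1 = i ∧ cu y.1 = i then α x.1 y.1 else 0) *
        (if cv x.2 = j ∧ cv y.2 = j then β x.2 y.2 else 0) /
        ((∑ x, if cu x = i then marginal α x else 0) *
          (∑ y, if cv y = j then marginal β y else 0))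
        = ((if cu x.1 = i ∧ cu y.1 = i then α x.1 y.1 else 0) /
            (∑ x, if cu x = i then marginal α x else 0)) *
          ((if cv x.2 = j ∧ cv y.2 = j then β x.2 y.2 else 0) /
            (∑ y, if cv y = j then marginal β y else 0)) := by
      intro x y; rw [div_mul_div_comm]
    simp only [e3]
    rw [sum_prod_factor
      (fun a b => (if cu a = i ∧ cu b = i then α a b else 0) /
        (∑ x, if cu x = i then marginal α x else 0))
      (fun a b => (if cv a = j ∧ cv b = j then β a b else 0) /
        (∑ y, if cv y = j then marginal β y else 0))]
    have f1 : (∑ u, ∑ u', (if cu u = i ∧ cu u' = i then α u u' else 0) /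
        (∑ x, if cu x = i then marginal α x else 0)) = 1 := by
      simp only [← Finset.sum_div]
      rw [hAsum]
      exact div_self hSU.ne'
    have f2 : (∑ v, ∑ v', (if cv v = j ∧ cv v' = j then β v v' else 0) /
        (∑ y, if cv y = j then marginal β y else 0)) = 1 := by
      simp only [← Finset.sum_div]
      rw [hBsum]
      exact div_self hSV.ne'
    rw [f1, f2, mul_one]
  · have hne : (if cu x.1 = i ∧ cu y.1 = i then α x.1 y.1 else 0) *
        (if cv x.2 = j ∧ cv y.2 = j then β x.2 y.2 else 0) ≠ 0 := by
      intro h0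
      rw [h0, zero_div] at hpos
      exact lt_irrefl 0 hpos
    have h1 : cu x.1 = i ∧ cu y.1 = i := by
      by_contra hc
      rw [if_neg hc, zero_mul] at hne
      exact hne rfl
    have h2 : cv x.2 = j ∧ cv y.2 = j := by
      by_contra hc
      rw [if_neg hc, mul_zero] at hne
      exact hne rfl
    exact ⟨h1.1, h2.1, h1.2, h2.2⟩
  · have hfeq : (fun (p q : {u : U // cu u = i} × {v : V // cv v = j}) =>
        (if cu (p.1.1, p.2.1).1 = i ∧ cu (q.1.1, q.2.1).1 = i
            then α (p.1.1, p.2.1).1 (q.1.1, q.2.1).1 else 0) *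
        (if cv (p.1.1, p.2.1).2 = j ∧ cv (q.1.1, q.2.1).2 = j
            then β (p.1.1, p.2.1).2 (q.1.1, q.2.1).2 else 0) /
        ((∑ x, if cu x = i then marginal α x else 0) *
          (∑ y, if cv y = j then marginal β y else 0)))
        = fun (p q : {u : U // cu u = i} × {v : V // cv v = j}) =>
          (α p.1.1 q.1.1 / (∑ x : U, if cu x = i then marginal α x else 0)) *
          (β p.2.1 q.2.1 / (∑ y : V, if cv y = j then marginal β y else 0)) := by
      funext p q
      rw [if_pos ⟨p.1.2, q.1.2⟩, if_pos ⟨p.2.2, q.2.2⟩, div_mul_div_comm]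
    rw [hfeq]
    exact product_is_joining _ _
      (subtype_weight_fn α hα cu hcu_edge i u0 hu0 hαfull)
      (subtype_weight_fn β hβ cv hcv_edge j v0 hv0 hβfull)
end product

section restricted
variable {U V : Type*} [Fintype U] [Fintype V] {k l : ℕ}

lemma restricted_component
    (α : U → U → ℝ) (β : V → V → ℝ)
    (hα : IsWeightFunction α) (hβ : IsWeightFunction β)
    (hαfull : ∀ u, 0 < marginal α u) (hβfull : ∀ v, 0 < marginal β v)
    (cu : U → Fin k) (cv : V → Fin l)
    (hcu_edge : ∀ u u', 0 < α u u' → cu u = cu u')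
    (hcv_edge : ∀ v v', 0 < β v v' → cv v = cv v')
    (hcu_conn : ∀ u u', cu u = cu u' → u ≠ u' →
      ∃ n, ∃ w : Fin (n + 1) → U, w 0 = u ∧ w (Fin.last n) = u' ∧
        ∀ i : Fin n, 0 < α (w i.castSucc) (w i.succ))
    (hcv_conn : ∀ v v', cv v = cv v' → v ≠ v' →
      ∃ n, ∃ w : Fin (n + 1) → V, w 0 = v ∧ w (Fin.last n) = v' ∧
        ∀ i : Fin n, 0 < β (w i.castSucc) (w i.succ))
    (γ : U × V → U × V → ℝ) (hγ : IsWeightJoining α β γ)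
    (i : Fin k) (j : Fin l) (u0 : U) (hu0 : cu u0 = i) (v0 : V) (hv0 : cv v0 = j)
    (hPine : (∑ x : U × V, if cu x.1 = i ∧ cv x.2 = j then marginal γ x else 0) ≠ 0) :
    IsWeightFunction (fun (x y : U × V) =>
      if (cu x.1 = i ∧ cv x.2 = j) ∧ (cu y.1 = i ∧ cv y.2 = j) then
        γ x y / (∑ x : U × V, if cu x.1 = i ∧ cv x.2 = j then marginal γ x else 0)
      else 0) ∧
    (∀ x y : U × V,
      0 < (if (cu x.1 = i ∧ cv x.2 = j) ∧ (cu y.1 = i ∧ cv y.2 = j) then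
        γ x y / (∑ x : U × V, if cu x.1 = i ∧ cv x.2 = j then marginal γ x else 0)
      else 0) → cu x.1 = i ∧ cv x.2 = j ∧ cu y.1 = i ∧ cv y.2 = j) ∧
    IsWeightJoining
      (fun (u u' : {u : U // cu u = i}) =>
        α u.1 u'.1 / (∑ x : U, if cu x = i then marginal α x else 0))
      (fun (v v' : {v : V // cv v = j}) =>
        β v.1 v'.1 / (∑ y : V, if cv y = j then marginal β y else 0))
      (fun (p q : {u : U // cu u = i} × {v : V // cv v = j}) =>
        γ (p.1.1, p.2.1) (q.1.1, q.2.1) /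
          (∑ x : U × V, if cu x.1 = i ∧ cv x.2 = j then marginal γ x else 0)) := by
  classical
  obtain ⟨⟨hγ0, hγs, hγ1⟩, hγU, hγV, hγtU, hγtV⟩ := hγ
  have hγfull : IsWeightJoining α β γ := ⟨⟨hγ0, hγs, hγ1⟩, hγU, hγV, hγtU, hγtV⟩
  have hr0 : ∀ x, 0 ≤ marginal γ x := fun x => Finset.sum_nonneg fun y _ => hγ0 x y
  have hPi0 : 0 ≤ ∑ x : U × V, if cu x.1 = i ∧ cv x.2 = j then marginal γ x else 0 := by
    refine Finset.sum_nonneg fun x _ => ?_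
    by_cases h : cu x.1 = i ∧ cv x.2 = j <;> simp [h, hr0 x]
  have hPipos : 0 < ∑ x : U × V, if cu x.1 = i ∧ cv x.2 = j then marginal γ x else 0 :=
    hPi0.lt_of_ne (Ne.symm hPine)
  have hsupp := joining_support α β hα hβ hαfull hβfull γ hγfull
  have hcompU : ∀ x y : U × V, γ x y ≠ 0 → cu x.1 = cu y.1 :=
    fun x y h => hcu_edge _ _ (hsupp x.1 x.2 y.1 y.2 h).1
  have hcompV : ∀ x y : U × V, γ x y ≠ 0 → cv x.2 = cv y.2 :=
    fun x y h => hcv_edge _ _ (hsupp x.1 x.2 y.1 y.2 h).2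
  have hSU : 0 < ∑ x : U, if cu x = i then marginal α x else 0 := by
    refine Finset.sum_pos' (fun u _ => ?_) ⟨u0, mem_univ _, ?_⟩
    · by_cases h : cu u = i <;> simp [h, (hαfull u).le]
    · simp [hu0, hαfull u0]
  have hSV : 0 < ∑ y : V, if cv y = j then marginal β y else 0 := by
    refine Finset.sum_pos' (fun v _ => ?_) ⟨v0, mem_univ _, ?_⟩
    · by_cases h : cv v = j <;> simp [h, (hβfull v).le]
    · simp [hv0, hβfull v0]
  -- fiber marginal identities
  have hfibU : ∀ u, cu u = i →
      (∑ v, if cv v = j then marginal γ (u, v) else 0)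
        * (∑ x, if cu x = i then marginal α x else 0)
      = (∑ x : U × V, if cu x.1 = i ∧ cv x.2 = j then marginal γ x else 0)
        * marginal α u :=
    fun u hu => fiber_marginal α β hα hβ hαfull hβfull cu cv hcv_edge hcu_conn γ hγfull i j u hu
  have hfibV : ∀ v, cv v = j →
      (∑ u, if cu u = i then marginal γ (u, v) else 0)
        * (∑ y, if cv y = j then marginal β y else 0)
      = (∑ x : U × V, if cu x.1 = i ∧ cv x.2 = j then marginal γ x else 0)
        * marginal β v := by
    intro v hv
    have hfm := fiber_marginal β α hβ hα hβfull hαfull cv cu hcu_edge hcv_conn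
      (fun x y => γ (x.2, x.1) (y.2, y.1)) (swap_joining α β γ hγfull) j i v hv
    have e1 : (∑ u, if cu u = i then
        marginal (fun (x y : V × U) => γ (x.2, x.1) (y.2, y.1)) (v, u) else 0)
        = ∑ u, if cu u = i then marginal γ (u, v) else 0 := by
      refine Finset.sum_congr rfl fun u _ => ?_
      rw [marginal_swap]
    have e2 : (∑ x : V × U, if cv x.1 = j ∧ cu x.2 = i then
        marginal (fun (x y : V × U) => γ (x.2, x.1) (y.2, y.1)) x else 0)
        = ∑ x : U × V, if cu x.1 = i ∧ cv x.2 = j then marginal γ x else 0 := by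
      rw [Fintype.sum_prod_type, Fintype.sum_prod_type, Finset.sum_comm]
      refine Finset.sum_congr rfl fun u _ => Finset.sum_congr rfl fun v' _ => ?_
      rw [marginal_swap]
      exact if_congr (Iff.intro (fun h => ⟨h.2, h.1⟩) (fun h => ⟨h.2, h.1⟩)) rfl rfl
    rw [e1, e2] at hfm
    exact hfm
  -- row sums of the restricted weight function
  have hrow : ∀ x : U × V,
      (∑ y : U × V, if (cu x.1 = i ∧ cv x.2 = j) ∧ (cu y.1 = i ∧ cv y.2 = j) then
        γ x y / (∑ x : U × V, if cu x.1 = i ∧ cv x.2 = j then marginal γ x else 0) else 0)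
      = (if cu x.1 = i ∧ cv x.2 = j then marginal γ x else 0)
        / (∑ x : U × V, if cu x.1 = i ∧ cv x.2 = j then marginal γ x else 0) := by
    intro x
    by_cases hx : cu x.1 = i ∧ cv x.2 = j
    · rw [if_pos hx]
      rw [show (∑ y : U × V, if (cu x.1 = i ∧ cv x.2 = j) ∧ (cu y.1 = i ∧ cv y.2 = j) then
          γ x y / (∑ x : U × V, if cu x.1 = i ∧ cv x.2 = j then marginal γ x else 0) else 0)
          = ∑ y : U × V,
            γ x y / (∑ x : U × V, if cu x.1 = i ∧ cv x.2 = j then marginal γ x else 0) from ?_]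
      · rw [← Finset.sum_div]
        rfl
      · refine Finset.sum_congr rfl fun y _ => ?_
        by_cases hz : γ x y = 0
        · simp [hz]
        · rw [if_pos ⟨hx, (hcompU x y hz).symm.trans hx.1, (hcompV x y hz).symm.trans hx.2⟩]
    · rw [if_neg hx, zero_div]
      exact Finset.sum_eq_zero fun y _ => if_neg (fun hc => hx hc.1)
  refine ⟨⟨fun x y => ?_, fun x y => ?_, ?_⟩, fun x y hpos => ?_, ?_⟩
  · dsimp only
    split_ifs with h
    · exact div_nonneg (hγ0 x y) hPi0
    · rfl
  · dsimp only
    by_cases h : (cu x.1 = i ∧ cv x.2 = j) ∧ (cu y.1 = i ∧ cv y.2 = j)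
    · rw [if_pos h, if_pos ⟨h.2, h.1⟩, hγs x y]
    · rw [if_neg h, if_neg fun hc => h ⟨hc.2, hc.1⟩]
  · rw [show (∑ x : U × V, ∑ y : U × V,
        if (cu x.1 = i ∧ cv x.2 = j) ∧ (cu y.1 = i ∧ cv y.2 = j) then
          γ x y / (∑ x : U × V, if cu x.1 = i ∧ cv x.2 = j then marginal γ x else 0) else 0)
        = ∑ x : U × V, (if cu x.1 = i ∧ cv x.2 = j then marginal γ x else 0)
          / (∑ x : U × V, if cu x.1 = i ∧ cv x.2 = j then marginal γ x else 0) from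
      Finset.sum_congr rfl fun x _ => hrow x]
    rw [← Finset.sum_div]
    exact div_self hPine
  · by_cases h : (cu x.1 = i ∧ cv x.2 = j) ∧ (cu y.1 = i ∧ cv y.2 = j)
    · exact ⟨h.1.1, h.1.2, h.2.1, h.2.2⟩
    · rw [if_neg h] at hpos
      exact absurd hpos (lt_irrefl 0)
  -- the weight joining on the component
  · have hmargα : ∀ us : {u : U // cu u = i},
        marginal (fun (u u' : {u : U // cu u = i}) =>
          α u.1 u'.1 / (∑ x : U, if cu x = i then marginal α x else 0)) us
        = marginal α us.1 / (∑ x : U, if cu x = i then marginal α x else 0) := by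
      intro us
      show (∑ us' : {u : U // cu u = i},
        α us.1 us'.1 / (∑ x : U, if cu x = i then marginal α x else 0)) = _
      rw [← Finset.sum_div]
      congr 1
      rw [sum_subtype_ite (fun u => cu u = i) (fun u' => α us.1 u')]
      exact sum_ite_fiber hα.1 hcu_edge us.2
    have hmargβ : ∀ vs : {v : V // cv v = j},
        marginal (fun (v v' : {v : V // cv v = j}) =>
          β v.1 v'.1 / (∑ y : V, if cv y = j then marginal β y else 0)) vs
        = marginal β vs.1 / (∑ y : V, if cv y = j then marginal β y else 0) := by
      intro vs
      show (∑ vs' : {v : V // cv v = j},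
        β vs.1 vs'.1 / (∑ y : V, if cv y = j then marginal β y else 0)) = _
      rw [← Finset.sum_div]
      congr 1
      rw [sum_subtype_ite (fun v => cv v = j) (fun v' => β vs.1 v')]
      exact sum_ite_fiber hβ.1 hcv_edge vs.2
    have hmargγ' : ∀ (us : {u : U // cu u = i}) (vs : {v : V // cv v = j}),
        marginal (fun (p q : {u : U // cu u = i} × {v : V // cv v = j}) =>
          γ (p.1.1, p.2.1) (q.1.1, q.2.1) /
            (∑ x : U × V, if cu x.1 = i ∧ cv x.2 = j then marginal γ x else 0)) (us, vs)
        = marginal γ (us.1, vs.1)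
            / (∑ x : U × V, if cu x.1 = i ∧ cv x.2 = j then marginal γ x else 0) := by
      intro us vs
      show (∑ q : {u : U // cu u = i} × {v : V // cv v = j},
        γ (us.1, vs.1) (q.1.1, q.2.1) /
          (∑ x : U × V, if cu x.1 = i ∧ cv x.2 = j then marginal γ x else 0)) = _
      rw [← Finset.sum_div]
      congr 1
      rw [sum_subtype_prod (fun u => cu u = i) (fun v => cv v = j)
        (fun u v => γ (us.1, vs.1) (u, v))]
      rw [show marginal γ (us.1, vs.1) = ∑ u, ∑ v, γ (us.1, vs.1) (u, v) from by
        unfold marginal; exact Fintype.sum_prod_type _]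
      refine Finset.sum_congr rfl fun u _ => Finset.sum_congr rfl fun v _ => ?_
      by_cases hz : γ (us.1, vs.1) (u, v) = 0
      · simp [hz]
      · rw [if_pos ⟨(hcompU _ _ hz).symm.trans us.2, (hcompV _ _ hz).symm.trans vs.2⟩]
  -- assemble the joining
    refine ⟨⟨fun p q => div_nonneg (hγ0 _ _) hPi0,
      fun p q => by dsimp only; rw [hγs], ?_⟩, ?_, ?_, ?_, ?_⟩
    · rw [show (∑ p : {u : U // cu u = i} × {v : V // cv v = j},
          ∑ q : {u : U // cu u = i} × {v : V // cv v = j},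
          γ (p.1.1, p.2.1) (q.1.1, q.2.1) /
            (∑ x : U × V, if cu x.1 = i ∧ cv x.2 = j then marginal γ x else 0))
          = ∑ p : {u : U // cu u = i} × {v : V // cv v = j},
            marginal γ (p.1.1, p.2.1)
              / (∑ x : U × V, if cu x.1 = i ∧ cv x.2 = j then marginal γ x else 0) from
        Finset.sum_congr rfl fun p _ => hmargγ' p.1 p.2]
      rw [← Finset.sum_div]
      rw [sum_subtype_prod (fun u => cu u = i) (fun v => cv v = j)
        (fun u v => marginal γ (u, v))]
      rw [show (∑ x : U × V, if cu x.1 = i ∧ cv x.2 = j then marginal γ x else 0)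
          = ∑ u, ∑ v, if cu u = i ∧ cv v = j then marginal γ (u, v) else 0 from
        Fintype.sum_prod_type _]
      exact div_self (by
        rw [← Fintype.sum_prod_type (f := fun x : U × V =>
          if cu x.1 = i ∧ cv x.2 = j then marginal γ x else 0)]
        exact hPine)
    · intro us
      rw [show (∑ vs : {v : V // cv v = j},
          marginal (fun (p q : {u : U // cu u = i} × {v : V // cv v = j}) =>
            γ (p.1.1, p.2.1) (q.1.1, q.2.1) /
              (∑ x : U × V, if cu x.1 = i ∧ cv x.2 = j then marginal γ x else 0)) (us, vs))
          = ∑ vs : {v : V // cv v = j}, marginal γ (us.1, vs.1)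
              / (∑ x : U × V, if cu x.1 = i ∧ cv x.2 = j then marginal γ x else 0) from
        Finset.sum_congr rfl fun vs _ => hmargγ' us vs]
      rw [hmargα us, ← Finset.sum_div]
      rw [sum_subtype_ite (fun v => cv v = j) (fun v => marginal γ (us.1, v))]
      rw [div_eq_div_iff hPine hSU.ne']
      rw [hfibU us.1 us.2]
      ring
    · intro vs
      rw [show (∑ us : {u : U // cu u = i},
          marginal (fun (p q : {u : U // cu u = i} × {v : V // cv v = j}) =>
            γ (p.1.1, p.2.1) (q.1.1, q.2.1) /
              (∑ x : U × V, if cu x.1 = i ∧ cv x.2 = j then marginal γ x else 0)) (us, vs))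
          = ∑ us : {u : U // cu u = i}, marginal γ (us.1, vs.1)
              / (∑ x : U × V, if cu x.1 = i ∧ cv x.2 = j then marginal γ x else 0) from
        Finset.sum_congr rfl fun us _ => hmargγ' us vs]
      rw [hmargβ vs, ← Finset.sum_div]
      rw [sum_subtype_ite (fun u => cu u = i) (fun u => marginal γ (u, vs.1))]
      rw [div_eq_div_iff hPine hSV.ne']
      rw [hfibV vs.1 vs.2]
      ring
    · intro us us' vs
      have hsum' : (∑ vs' : {v : V // cv v = j},
          γ (us.1, vs.1) (us'.1, vs'.1) /
            (∑ x : U × V, if cu x.1 = i ∧ cv x.2 = j then marginal γ x else 0))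
          = (∑ v', γ (us.1, vs.1) (us'.1, v'))
            / (∑ x : U × V, if cu x.1 = i ∧ cv x.2 = j then marginal γ x else 0) := by
        rw [← Finset.sum_div]
        congr 1
        rw [sum_subtype_ite (fun v => cv v = j) (fun v' => γ (us.1, vs.1) (us'.1, v'))]
        refine Finset.sum_congr rfl fun v' _ => ?_
        by_cases hz : γ (us.1, vs.1) (us'.1, v') = 0
        · simp [hz]
        · rw [if_pos ((hcompV _ _ hz).symm.trans vs.2)]
      show marginal _ us * _ = _
      rw [hmargα us, hmargγ' us vs, hsum', div_mul_div_comm, div_mul_div_comm]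
      rw [hγtU us.1 us'.1 vs.1]
    · intro vs vs' us
      have hsum' : (∑ us' : {u : U // cu u = i},
          γ (us.1, vs.1) (us'.1, vs'.1) /
            (∑ x : U × V, if cu x.1 = i ∧ cv x.2 = j then marginal γ x else 0))
          = (∑ u', γ (us.1, vs.1) (u', vs'.1))
            / (∑ x : U × V, if cu x.1 = i ∧ cv x.2 = j then marginal γ x else 0) := by
        rw [← Finset.sum_div]
        congr 1
        rw [sum_subtype_ite (fun u => cu u = i) (fun u' => γ (us.1, vs.1) (u', vs'.1))]
        refine Finset.sum_congr rfl fun u' _ => ?_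
        by_cases hz : γ (us.1, vs.1) (u', vs'.1) = 0
        · simp [hz]
        · rw [if_pos ((hcompU _ _ hz).symm.trans us.2)]
      show marginal _ vs * _ = _
      rw [hmargβ vs, hmargγ' us vs, hsum', div_mul_div_comm, div_mul_div_comm]
      rw [hγtV vs.1 vs'.1 us.1]
end restricted

/-- Decomposition of a weight joining of two (possibly disconnected)
fully supported graphs over their connected components.  The components of `G` are the
fibers of `cu : U → Fin k` and those of `H` the fibers of `cv : V → Fin l`: no
positive-weight edge crosses fibers, each fiber is connected by positive-weight paths,
and every fiber is nonempty.  Then any weight joining `γ` of `α` and `β` decomposes as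
`γ = ∑_{i,j} π i j • γc i j` where `π` is a coupling of the component weight
distributions `ν_G` and `ν_H`, each `γc i j` is a weight function supported in
`(U_i × V_j)²`, and the restriction of `γc i j` to `(U_i × V_j)²` is a weight joining
of the normalized component weight functions `α_i` and `β_j`. -/
theorem weightJoining_decomposition_over_components
    {U V : Type*} [Fintype U] [Fintype V] {k l : ℕ}
    (α : U → U → ℝ) (β : V → V → ℝ)
    (hα : IsWeightFunction α) (hβ : IsWeightFunction β)
    (hαfull : ∀ u, 0 < marginal α u) (hβfull : ∀ v, 0 < marginal β v)
    (cu : U → Fin k) (cv : V → Fin l)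
    (hcu_surj : Function.Surjective cu) (hcv_surj : Function.Surjective cv)
    (hcu_edge : ∀ u u', 0 < α u u' → cu u = cu u')
    (hcv_edge : ∀ v v', 0 < β v v' → cv v = cv v')
    (hcu_conn : ∀ u u', cu u = cu u' → u ≠ u' →
      ∃ n, ∃ w : Fin (n + 1) → U, w 0 = u ∧ w (Fin.last n) = u' ∧
        ∀ i : Fin n, 0 < α (w i.castSucc) (w i.succ))
    (hcv_conn : ∀ v v', cv v = cv v' → v ≠ v' →
      ∃ n, ∃ w : Fin (n + 1) → V, w 0 = v ∧ w (Fin.last n) = v' ∧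
        ∀ i : Fin n, 0 < β (w i.castSucc) (w i.succ))
    (γ : U × V → U × V → ℝ) (hγ : IsWeightJoining α β γ) :
    ∃ π : Fin k → Fin l → ℝ,
      (∀ i j, 0 ≤ π i j) ∧
      (∀ i, ∑ j, π i j = ∑ u : U, if cu u = i then marginal α u else 0) ∧
      (∀ j, ∑ i, π i j = ∑ v : V, if cv v = j then marginal β v else 0) ∧
      ∃ γc : Fin k → Fin l → (U × V → U × V → ℝ),
        (∀ i j, IsWeightFunction (γc i j)) ∧
        (∀ i j, ∀ p q : U × V, 0 < γc i j p q →
          cu p.1 = i ∧ cv p.2 = j ∧ cu q.1 = i ∧ cv q.2 = j) ∧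
        (∀ i j, IsWeightJoining
          (fun (u u' : {u : U // cu u = i}) =>
            α u.1 u'.1 / (∑ x : U, if cu x = i then marginal α x else 0))
          (fun (v v' : {v : V // cv v = j}) =>
            β v.1 v'.1 / (∑ y : V, if cv y = j then marginal β y else 0))
          (fun p q => γc i j (p.1.1, p.2.1) (q.1.1, q.2.1))) ∧
        (∀ p q : U × V, γ p q = ∑ i, ∑ j, π i j * γc i j p q) := by
  classical
  obtain ⟨⟨hγ0, hγs, hγ1⟩, hγU, hγV, hγtU, hγtV⟩ := hγ
  have hγfull : IsWeightJoining α β γ := ⟨⟨hγ0, hγs, hγ1⟩, hγU, hγV, hγtU, hγtV⟩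
  have hr0 : ∀ x, 0 ≤ marginal γ x := fun x => Finset.sum_nonneg fun y _ => hγ0 x y
  have hsupp := joining_support α β hα hβ hαfull hβfull γ hγfull
  have hcompU : ∀ x y : U × V, γ x y ≠ 0 → cu x.1 = cu y.1 :=
    fun x y h => hcu_edge _ _ (hsupp x.1 x.2 y.1 y.2 h).1
  have hcompV : ∀ x y : U × V, γ x y ≠ 0 → cv x.2 = cv y.2 :=
    fun x y h => hcv_edge _ _ (hsupp x.1 x.2 y.1 y.2 h).2
  refine ⟨fun i j => ∑ x : U × V, if cu x.1 = i ∧ cv x.2 = j then marginal γ x else 0,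
    ?_, ?_, ?_,
    ⟨fun i j (x y : U × V) =>
      if (∑ x : U × V, if cu x.1 = i ∧ cv x.2 = j then marginal γ x else 0) = 0 then
        (if cu x.1 = i ∧ cu y.1 = i then α x.1 y.1 else 0) *
        (if cv x.2 = j ∧ cv y.2 = j then β x.2 y.2 else 0) /
        ((∑ x, if cu x = i then marginal α x else 0) *
          (∑ y, if cv y = j then marginal β y else 0))
      else
        if (cu x.1 = i ∧ cv x.2 = j) ∧ (cu y.1 = i ∧ cv y.2 = j) then
          γ x y / (∑ x : U × V, if cu x.1 = i ∧ cv x.2 = j then marginal γ x else 0)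
        else 0,
      ?_, ?_, ?_, ?_⟩⟩
  -- nonnegativity of π
  · intro i j
    dsimp only
    refine Finset.sum_nonneg fun x _ => ?_
    by_cases h : cu x.1 = i ∧ cv x.2 = j <;> simp [h, hr0 x]
  -- row sums
  · intro i
    dsimp only
    calc (∑ j, ∑ x : U × V, if cu x.1 = i ∧ cv x.2 = j then marginal γ x else 0)
        = ∑ x : U × V, ∑ j, if cu x.1 = i ∧ cv x.2 = j then marginal γ x else 0 :=
          Finset.sum_comm
      _ = ∑ x : U × V, if cu x.1 = i then marginal γ x else 0 := by
          refine Finset.sum_congr rfl fun x _ => ?_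
          by_cases h : cu x.1 = i <;> simp [h]
      _ = ∑ u, if cu u = i then marginal α u else 0 := by
          rw [Fintype.sum_prod_type]
          refine Finset.sum_congr rfl fun u _ => ?_
          by_cases h : cu u = i
          · simp only [h, if_true]
            exact hγU u
          · simp [h]
  -- column sums
  · intro j
    dsimp only
    calc (∑ i, ∑ x : U × V, if cu x.1 = i ∧ cv x.2 = j then marginal γ x else 0)
        = ∑ x : U × V, ∑ i, if cu x.1 = i ∧ cv x.2 = j then marginal γ x else 0 :=
          Finset.sum_comm
      _ = ∑ x : U × V, if cv x.2 = j then marginal γ x else 0 := by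
          refine Finset.sum_congr rfl fun x _ => ?_
          by_cases h : cv x.2 = j <;> simp [h]
      _ = ∑ v, if cv v = j then marginal β v else 0 := by
          rw [Fintype.sum_prod_type, Finset.sum_comm]
          refine Finset.sum_congr rfl fun v _ => ?_
          by_cases h : cv v = j
          · simp only [h, if_true]
            exact hγV v
          · simp [h]
  -- each γc i j is a weight function
  · intro i j
    dsimp only
    obtain ⟨u0, hu0⟩ := hcu_surj i
    obtain ⟨v0, hv0⟩ := hcv_surj j
    by_cases hz : (∑ x : U × V, if cu x.1 = i ∧ cv x.2 = j then marginal γ x else 0) = 0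
    · rw [show (fun (x y : U × V) =>
          if (∑ x : U × V, if cu x.1 = i ∧ cv x.2 = j then marginal γ x else 0) = 0 then
            (if cu x.1 = i ∧ cu y.1 = i then α x.1 y.1 else 0) *
            (if cv x.2 = j ∧ cv y.2 = j then β x.2 y.2 else 0) /
            ((∑ x, if cu x = i then marginal α x else 0) *
              (∑ y, if cv y = j then marginal β y else 0))
          else
            if (cu x.1 = i ∧ cv x.2 = j) ∧ (cu y.1 = i ∧ cv y.2 = j) then
              γ x y / (∑ x : U × V, if cu x.1 = i ∧ cv x.2 = j then marginal γ x else 0)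
            else 0)
          = fun (x y : U × V) =>
            (if cu x.1 = i ∧ cu y.1 = i then α x.1 y.1 else 0) *
            (if cv x.2 = j ∧ cv y.2 = j then β x.2 y.2 else 0) /
            ((∑ x, if cu x = i then marginal α x else 0) *
              (∑ y, if cv y = j then marginal β y else 0)) from
        funext fun x => funext fun y => if_pos hz]
      exact (product_component α β hα hβ hαfull hβfull cu cv hcu_edge hcv_edge
        i j u0 hu0 v0 hv0).1
    · rw [show (fun (x y : U × V) =>
          if (∑ x : U × V, if cu x.1 = i ∧ cv x.2 = j then marginal γ x else 0) = 0 then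
            (if cu x.1 = i ∧ cu y.1 = i then α x.1 y.1 else 0) *
            (if cv x.2 = j ∧ cv y.2 = j then β x.2 y.2 else 0) /
            ((∑ x, if cu x = i then marginal α x else 0) *
              (∑ y, if cv y = j then marginal β y else 0))
          else
            if (cu x.1 = i ∧ cv x.2 = j) ∧ (cu y.1 = i ∧ cv y.2 = j) then
              γ x y / (∑ x : U × V, if cu x.1 = i ∧ cv x.2 = j then marginal γ x else 0)
            else 0)
          = fun (x y : U × V) =>
            if (cu x.1 = i ∧ cv x.2 = j) ∧ (cu y.1 = i ∧ cv y.2 = j) then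
              γ x y / (∑ x : U × V, if cu x.1 = i ∧ cv x.2 = j then marginal γ x else 0)
            else 0 from
        funext fun x => funext fun y => if_neg hz]
      exact (restricted_component α β hα hβ hαfull hβfull cu cv hcu_edge hcv_edge
        hcu_conn hcv_conn γ hγfull i j u0 hu0 v0 hv0 hz).1
  -- support of γc i j
  · intro i j x y hpos
    dsimp only at hpos
    obtain ⟨u0, hu0⟩ := hcu_surj i
    obtain ⟨v0, hv0⟩ := hcv_surj j
    by_cases hz : (∑ x : U × V, if cu x.1 = i ∧ cv x.2 = j then marginal γ x else 0) = 0
    · rw [if_pos hz] at hpos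
      exact (product_component α β hα hβ hαfull hβfull cu cv hcu_edge hcv_edge
        i j u0 hu0 v0 hv0).2.1 x y hpos
    · rw [if_neg hz] at hpos
      exact (restricted_component α β hα hβ hαfull hβfull cu cv hcu_edge hcv_edge
        hcu_conn hcv_conn γ hγfull i j u0 hu0 v0 hv0 hz).2.1 x y hpos
  -- weight joinings on components
  · intro i j
    obtain ⟨u0, hu0⟩ := hcu_surj i
    obtain ⟨v0, hv0⟩ := hcv_surj j
    by_cases hz : (∑ x : U × V, if cu x.1 = i ∧ cv x.2 = j then marginal γ x else 0) = 0
    · rw [show (fun (p q : {u : U // cu u = i} × {v : V // cv v = j}) =>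
          (fun i j (x y : U × V) =>
            if (∑ x : U × V, if cu x.1 = i ∧ cv x.2 = j then marginal γ x else 0) = 0 then
              (if cu x.1 = i ∧ cu y.1 = i then α x.1 y.1 else 0) *
              (if cv x.2 = j ∧ cv y.2 = j then β x.2 y.2 else 0) /
              ((∑ x, if cu x = i then marginal α x else 0) *
                (∑ y, if cv y = j then marginal β y else 0))
            else
              if (cu x.1 = i ∧ cv x.2 = j) ∧ (cu y.1 = i ∧ cv y.2 = j) then
                γ x y / (∑ x : U × V, if cu x.1 = i ∧ cv x.2 = j then marginal γ x else 0)
              else 0) i j (p.1.1, p.2.1) (q.1.1, q.2.1))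
          = fun (p q : {u : U // cu u = i} × {v : V // cv v = j}) =>
            (if cu (p.1.1, p.2.1).1 = i ∧ cu (q.1.1, q.2.1).1 = i
                then α (p.1.1, p.2.1).1 (q.1.1, q.2.1).1 else 0) *
            (if cv (p.1.1, p.2.1).2 = j ∧ cv (q.1.1, q.2.1).2 = j
                then β (p.1.1, p.2.1).2 (q.1.1, q.2.1).2 else 0) /
            ((∑ x, if cu x = i then marginal α x else 0) *
              (∑ y, if cv y = j then marginal β y else 0)) from
        funext fun p => funext fun q => if_pos hz]
      exact (product_component α β hα hβ hαfull hβfull cu cv hcu_edge hcv_edge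
        i j u0 hu0 v0 hv0).2.2
    · rw [show (fun (p q : {u : U // cu u = i} × {v : V // cv v = j}) =>
          (fun i j (x y : U × V) =>
            if (∑ x : U × V, if cu x.1 = i ∧ cv x.2 = j then marginal γ x else 0) = 0 then
              (if cu x.1 = i ∧ cu y.1 = i then α x.1 y.1 else 0) *
              (if cv x.2 = j ∧ cv y.2 = j then β x.2 y.2 else 0) /
              ((∑ x, if cu x = i then marginal α x else 0) *
                (∑ y, if cv y = j then marginal β y else 0))
            else
              if (cu x.1 = i ∧ cv x.2 = j) ∧ (cu y.1 = i ∧ cv y.2 = j) then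
                γ x y / (∑ x : U × V, if cu x.1 = i ∧ cv x.2 = j then marginal γ x else 0)
              else 0) i j (p.1.1, p.2.1) (q.1.1, q.2.1))
          = fun (p q : {u : U // cu u = i} × {v : V // cv v = j}) =>
            γ (p.1.1, p.2.1) (q.1.1, q.2.1) /
              (∑ x : U × V, if cu x.1 = i ∧ cv x.2 = j then marginal γ x else 0) from
        funext fun p => funext fun q => by
          dsimp only
          rw [if_neg hz, if_pos ⟨⟨p.1.2, p.2.2⟩, ⟨q.1.2, q.2.2⟩⟩]]
      exact (restricted_component α β hα hβ hαfull hβfull cu cv hcu_edge hcv_edge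
        hcu_conn hcv_conn γ hγfull i j u0 hu0 v0 hv0 hz).2.2
  -- decomposition
  · intro x y
    dsimp only
    have hvan : ∀ i j, ¬(cu x.1 = i ∧ cv x.2 = j) →
        (if (∑ x : U × V, if cu x.1 = i ∧ cv x.2 = j then marginal γ x else 0) = 0 then
          (if cu x.1 = i ∧ cu y.1 = i then α x.1 y.1 else 0) *
          (if cv x.2 = j ∧ cv y.2 = j then β x.2 y.2 else 0) /
          ((∑ x, if cu x = i then marginal α x else 0) *
            (∑ y, if cv y = j then marginal β y else 0))
        else
          if (cu x.1 = i ∧ cv x.2 = j) ∧ (cu y.1 = i ∧ cv y.2 = j) then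
            γ x y / (∑ x : U × V, if cu x.1 = i ∧ cv x.2 = j then marginal γ x else 0)
          else 0) = 0 := by
      intro i j hc
      by_cases hz : (∑ x : U × V, if cu x.1 = i ∧ cv x.2 = j then marginal γ x else 0) = 0
      · rw [if_pos hz]
        rcases not_and_or.mp hc with h | h
        · rw [if_neg (fun hcc => h hcc.1), zero_mul, zero_div]
        · rw [if_neg (fun hcc : cv x.2 = j ∧ cv y.2 = j => h hcc.1), mul_zero, zero_div]
      · rw [if_neg hz, if_neg (fun hcc => hc hcc.1)]
    rw [Finset.sum_eq_single (cu x.1)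
      (fun i _ hne => Finset.sum_eq_zero fun j _ => by
        rw [hvan i j (fun hc => hne hc.1.symm), mul_zero])
      (fun h => absurd (Finset.mem_univ _) h)]
    rw [Finset.sum_eq_single (cv x.2)
      (fun j _ hne => by
        rw [hvan (cu x.1) j (fun hc => hne hc.2.symm), mul_zero])
      (fun h => absurd (Finset.mem_univ _) h)]
    by_cases hz : (∑ z : U × V, if cu z.1 = cu x.1 ∧ cv z.2 = cv x.2
        then marginal γ z else 0) = 0
    · rw [if_pos hz]
      have h1 : (if cu x.1 = cu x.1 ∧ cv x.2 = cv x.2 then marginal γ x else 0)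
          ≤ ∑ z : U × V, if cu z.1 = cu x.1 ∧ cv z.2 = cv x.2 then marginal γ z else 0 := by
        refine Finset.single_le_sum (f := fun z : U × V =>
          if cu z.1 = cu x.1 ∧ cv z.2 = cv x.2 then marginal γ z else 0)
          (fun z _ => ?_) (Finset.mem_univ x)
        by_cases h : cu z.1 = cu x.1 ∧ cv z.2 = cv x.2 <;> simp [h, hr0 z]
      rw [if_pos ⟨rfl, rfl⟩, hz] at h1
      have h2 : γ x y ≤ marginal γ x :=
        Finset.single_le_sum (fun z _ => hγ0 x z) (Finset.mem_univ y)
      have h3 := hγ0 x y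
      have h4 := hr0 x
      -- goal : γ x y = Pi * (product stuff); Pi = 0
      rw [show (∑ x_1 : U × V, if cu x_1.1 = cu x.1 ∧ cv x_1.2 = cv x.2
          then marginal γ x_1 else 0) = 0 from hz, zero_mul]
      linarith
    · rw [if_neg hz]
      by_cases hy : cu y.1 = cu x.1 ∧ cv y.2 = cv x.2
      · rw [if_pos ⟨⟨rfl, rfl⟩, hy⟩, mul_comm, div_mul_cancel₀ _ hz]
      · rw [if_neg (fun hc => hy hc.2), mul_zero]
        by_contra hg
        exact hy ⟨(hcompU x y hg).symm, (hcompV x y hg).symm⟩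
end

section
/- Let α and β be weight functions on finite sets U and V, and let γ, γ' ∈ J(α,β) with supp(γ') ⊆ supp(γ). Then there exists t > 0 such that (1+t)·γ − t·γ' ∈ J(α,β). -/
open Finset

/-- The support of a function on pairs of pairs. -/
def jsupp {U V : Type*} (γ : U × V → U × V → ℝ) : Set ((U × V) × (U × V)) :=
  {pq | 0 < γ pq.1 pq.2}

open Filter Topology

/-
The constraints defining `J(α, β)` are linear equations, except for nonnegativity and the
normalisation `∑ γ = 1`, which is affine. Hence every affine combination `(1 + t)γ - tγ'` of
two weight joinings satisfies all of them but nonnegativity, and for that it suffices that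
`tγ' ≤ γ` pointwise. Since `supp γ' ⊆ supp γ` and the index set is finite, this holds for
all small enough `t > 0`.
-/

section AffineCombination

variable {X : Type*} [Fintype X]

theorem marginal_linearCombination (a b : ℝ) (f g : X → X → ℝ) (x : X) :
    marginal (fun p q => a * f p q + b * g p q) x = a * marginal f x + b * marginal g x := by
  simp only [marginal, sum_add_distrib, mul_sum]

theorem IsWeightFunction.affineCombination {f g : X → X → ℝ} {a b : ℝ}
    (hf : IsWeightFunction f) (hg : IsWeightFunction g) (hab : a + b = 1)
    (hnn : ∀ p q, 0 ≤ a * f p q + b * g p q) :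
    IsWeightFunction (fun p q => a * f p q + b * g p q) := by
  obtain ⟨-, hf_symm, hf_sum⟩ := hf
  obtain ⟨-, hg_symm, hg_sum⟩ := hg
  refine ⟨hnn, fun p q => by dsimp only; rw [hf_symm, hg_symm], ?_⟩
  simp only [sum_add_distrib, ← mul_sum, hf_sum, hg_sum, mul_one, hab]

end AffineCombination

theorem IsWeightJoining.affineCombination {U V : Type*} [Fintype U] [Fintype V]
    {α : U → U → ℝ} {β : V → V → ℝ} {γ γ' : U × V → U × V → ℝ} {a b : ℝ}
    (hγ : IsWeightJoining α β γ) (hγ' : IsWeightJoining α β γ') (hab : a + b = 1)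
    (hnn : ∀ p q, 0 ≤ a * γ p q + b * γ' p q) :
    IsWeightJoining α β (fun p q => a * γ p q + b * γ' p q) := by
  obtain ⟨hγ_wf, hγ_left, hγ_right, hγ_transU, hγ_transV⟩ := hγ
  obtain ⟨hγ'_wf, hγ'_left, hγ'_right, hγ'_transU, hγ'_transV⟩ := hγ'
  refine ⟨hγ_wf.affineCombination hγ'_wf hab hnn, fun u => ?_, fun v => ?_,
    fun u u' v => ?_, fun v v' u => ?_⟩
  · simp only [marginal_linearCombination, sum_add_distrib, ← mul_sum, hγ_left, hγ'_left]
    linear_combination hab * marginal α u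
  · simp only [marginal_linearCombination, sum_add_distrib, ← mul_sum, hγ_right, hγ'_right]
    linear_combination hab * marginal β v
  · simp only [marginal_linearCombination, sum_add_distrib, ← mul_sum]
    linear_combination a * hγ_transU u u' v + b * hγ'_transU u u' v
  · simp only [marginal_linearCombination, sum_add_distrib, ← mul_sum]
    linear_combination a * hγ_transV v v' u + b * hγ'_transV v v' u

theorem exists_pos_mul_le_of_pos_imp_pos {ι : Type*} [Finite ι] {f g : ι → ℝ}
    (hf : 0 ≤ f) (hsupp : ∀ i, 0 < g i → 0 < f i) :
    ∃ t : ℝ, 0 < t ∧ ∀ i, t * g i ≤ f i := by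
  have hsmall : ∀ i, ∀ᶠ t in 𝓝[>] (0 : ℝ), t * g i ≤ f i := by
    intro i
    rcases (hf i).lt_or_eq with hfi | hfi
    · have hlim : Tendsto (fun t : ℝ => t * g i) (𝓝[>] 0) (𝓝 0) := by
        simpa only [id, zero_mul] using (tendsto_id.mul_const (g i)).mono_left (nhdsWithin_le_nhds (a := (0 : ℝ)))
      exact (hlim.eventually (gt_mem_nhds hfi)).mono fun _ => le_of_lt
    · have hgi : g i ≤ 0 := not_lt.mp fun hgi => (hsupp i hgi).ne hfi
      filter_upwards [eventually_mem_nhdsWithin] with t (ht : 0 < t)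
      rw [← hfi]
      exact mul_nonpos_of_nonneg_of_nonpos ht.le hgi
  exact (eventually_mem_nhdsWithin.and (eventually_all.mpr hsmall)).exists

theorem exists_pos_combination_weightJoining_general
    {U V : Type*} [Fintype U] [Fintype V]
    (α : U → U → ℝ) (β : V → V → ℝ)
    (γ γ' : U × V → U × V → ℝ)
    (hγ : γ ∈ weightJoinings α β) (hγ' : γ' ∈ weightJoinings α β)
    (hsupp : jsupp γ' ⊆ jsupp γ) :
    ∃ t : ℝ, 0 < t ∧
      (fun p q => (1 + t) * γ p q - t * γ' p q) ∈ weightJoinings α β := by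
  have hγ_nonneg : ∀ p q, 0 ≤ γ p q := hγ.1.1
  obtain ⟨t, ht, hle⟩ := exists_pos_mul_le_of_pos_imp_pos
    (f := fun pq : (U × V) × (U × V) => γ pq.1 pq.2) (g := fun pq => γ' pq.1 pq.2)
    (fun pq => hγ_nonneg pq.1 pq.2) fun pq h => hsupp h
  have hnn : ∀ p q, 0 ≤ (1 + t) * γ p q + -t * γ' p q := fun p q => by
    linarith [hle (p, q), mul_nonneg ht.le (hγ_nonneg p q)]
  refine ⟨t, ht, ?_⟩
  show IsWeightJoining α β _
  simpa only [neg_mul, ← sub_eq_add_neg] using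
    IsWeightJoining.affineCombination hγ hγ' (by ring) hnn

/-- If `γ, γ' ∈ J(α,β)` with `supp(γ') ⊆ supp(γ)`, then for some
`t > 0` the function `(1+t)·γ − t·γ'` is again a weight joining of `α` and `β`. -/
theorem exists_pos_combination_weightJoining
    {U V : Type*} [Fintype U] [Fintype V]
    (α : U → U → ℝ) (β : V → V → ℝ)
    (hα : IsWeightFunction α) (hβ : IsWeightFunction β)
    (γ γ' : U × V → U × V → ℝ)
    (hγ : γ ∈ weightJoinings α β) (hγ' : γ' ∈ weightJoinings α β)
    (hsupp : jsupp γ' ⊆ jsupp γ) :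
    ∃ t : ℝ, 0 < t ∧
      (fun p q => (1 + t) * γ p q - t * γ' p q) ∈ weightJoinings α β :=
  exists_pos_combination_weightJoining_general α β γ γ' hγ hγ' hsupp
end

section
/- Let α and β be weight functions on finite sets U and V. A weight joining γ is an extreme point of the convex set J(α,β) if and only if supp(γ) is minimal, i.e., no weight joining γ' ∈ J(α,β) has supp(γ') strictly contained in supp(γ). Moreover, if γ is an extreme point of J(α,β) and γ' ∈ J(α,β) satisfies supp(γ') = supp(γ), then γ' = γ. -/
open Finset

/-- `γ` is an extreme point of the convex set `C`: whenever `γ = t•γ₁ + (1-t)•γ₂`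
with `γ₁, γ₂ ∈ C` and `t ∈ (0,1)`, we have `γ = γ₁ = γ₂`. -/
def IsExtremePointOf {X : Type*} [AddCommGroup X] [Module ℝ X] (C : Set X) (γ : X) : Prop :=
  γ ∈ C ∧ ∀ γ₁ ∈ C, ∀ γ₂ ∈ C, ∀ t : ℝ, 0 < t → t < 1 →
    γ = t • γ₁ + (1 - t) • γ₂ → γ = γ₁ ∧ γ = γ₂

lemma affine_mem {U V : Type*} [Fintype U] [Fintype V] {α : U → U → ℝ} {β : V → V → ℝ}
    {γ₁ γ₂ η : U × V → U × V → ℝ} {s t : ℝ} (hst : s + t = 1)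
    (h₁ : IsWeightJoining α β γ₁) (h₂ : IsWeightJoining α β γ₂)
    (hη : ∀ x y, η x y = s * γ₁ x y + t * γ₂ x y)
    (hpos : ∀ x y, 0 ≤ η x y) : IsWeightJoining α β η := by
  obtain ⟨⟨h1p, h1s, h1t⟩, h1m1, h1m2, h1c1, h1c2⟩ := h₁
  obtain ⟨⟨h2p, h2s, h2t⟩, h2m1, h2m2, h2c1, h2c2⟩ := h₂
  have hmarg : ∀ x, marginal η x = s * marginal γ₁ x + t * marginal γ₂ x := by
    intro x
    simp only [marginal, hη, Finset.sum_add_distrib, Finset.mul_sum]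
  refine ⟨⟨hpos, ?_, ?_⟩, ?_, ?_, ?_, ?_⟩
  · intro u u'; rw [hη, hη, h1s u u', h2s u u']
  · simp only [hη, Finset.sum_add_distrib, ← Finset.mul_sum]
    rw [h1t, h2t]; linarith
  · intro u
    simp only [hmarg, Finset.sum_add_distrib, ← Finset.mul_sum, h1m1 u, h2m1 u]
    linear_combination (marginal α u) * hst
  · intro v
    simp only [hmarg, Finset.sum_add_distrib, ← Finset.mul_sum, h1m2 v, h2m2 v]
    linear_combination (marginal β v) * hst
  · intro u u' v
    have e1 : ∑ v', η (u, v) (u', v')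
        = s * ∑ v', γ₁ (u, v) (u', v') + t * ∑ v', γ₂ (u, v) (u', v') := by
      simp only [hη, Finset.sum_add_distrib, Finset.mul_sum]
    rw [e1, hmarg]
    linear_combination s * h1c1 u u' v + t * h2c1 u u' v
  · intro v v' u
    have e1 : ∑ u', η (u, v) (u', v')
        = s * ∑ u', γ₁ (u, v) (u', v') + t * ∑ u', γ₂ (u, v) (u', v') := by
      simp only [hη, Finset.sum_add_distrib, Finset.mul_sum]
    rw [e1, hmarg]
    linear_combination s * h1c2 v v' u + t * h2c2 v v' u

lemma exists_smaller {U V : Type*} [Fintype U] [Fintype V] {α : U → U → ℝ} {β : V → V → ℝ}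
    {γ γ' : U × V → U × V → ℝ}
    (hγ : IsWeightJoining α β γ) (hγ' : IsWeightJoining α β γ')
    (hsub : jsupp γ' ⊆ jsupp γ) (hne : γ' ≠ γ) :
    ∃ γ'', IsWeightJoining α β γ'' ∧ jsupp γ'' ⊂ jsupp γ := by
  have hγpos := hγ.1.1
  have hγ'pos := hγ'.1.1
  -- entries where γ < γ'
  have hzero : ∀ x y, γ x y = 0 → γ' x y = 0 := by
    intro x y h0
    by_contra hne'
    have h1 : (0:ℝ) < γ' x y := lt_of_le_of_ne (hγ'pos x y) (Ne.symm hne')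
    have := hsub (show ((x,y):(U×V)×(U×V)) ∈ jsupp γ' from h1)
    simp only [jsupp, Set.mem_setOf_eq] at this
    rw [h0] at this; exact lt_irrefl 0 this
  have hS : ∃ σ : (U × V) × (U × V), γ σ.1 σ.2 < γ' σ.1 σ.2 := by
    by_contra hc
    push_neg at hc
    apply hne
    have h1γ : ∑ σ : (U × V) × (U × V), γ σ.1 σ.2 = 1 := by
      rw [Fintype.sum_prod_type]; exact hγ.1.2.2
    have h1γ' : ∑ σ : (U × V) × (U × V), γ' σ.1 σ.2 = 1 := by
      rw [Fintype.sum_prod_type]; exact hγ'.1.2.2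
    have hsum : ∑ σ : (U × V) × (U × V), (γ' σ.1 σ.2 - γ σ.1 σ.2) = 0 := by
      rw [Finset.sum_sub_distrib, h1γ, h1γ']; ring
    have hall : ∀ σ ∈ (Finset.univ : Finset ((U × V) × (U × V))),
        γ' σ.1 σ.2 - γ σ.1 σ.2 = 0 := by
      intro σ _
      have := (Finset.sum_eq_zero_iff_of_nonpos (fun σ _ => by linarith [hc σ])).mp hsum
      exact this σ (Finset.mem_univ σ)
    funext x y
    have := hall (x, y) (Finset.mem_univ _)
    linarith
  classical
  set S : Finset ((U × V) × (U × V)) :=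
    Finset.univ.filter (fun σ => γ σ.1 σ.2 < γ' σ.1 σ.2) with hSdef
  have hSne : S.Nonempty := by
    obtain ⟨σ, hσ⟩ := hS
    exact ⟨σ, by simp [hSdef, hσ]⟩
  obtain ⟨σ₀, hσ₀S, hσ₀min⟩ := Finset.exists_min_image S
    (fun σ => γ σ.1 σ.2 / (γ' σ.1 σ.2 - γ σ.1 σ.2)) hSne
  have hσ₀lt : γ σ₀.1 σ₀.2 < γ' σ₀.1 σ₀.2 := by
    simpa [hSdef] using hσ₀S
  have hσ₀pos : 0 < γ σ₀.1 σ₀.2 := by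
    rcases lt_or_eq_of_le (hγpos σ₀.1 σ₀.2) with h | h
    · exact h
    · exfalso
      have h2 := hzero σ₀.1 σ₀.2 h.symm
      rw [h2] at hσ₀lt
      linarith [hγpos σ₀.1 σ₀.2]
  set s : ℝ := γ σ₀.1 σ₀.2 / (γ' σ₀.1 σ₀.2 - γ σ₀.1 σ₀.2) with hsdef
  have hspos : 0 < s := div_pos hσ₀pos (by linarith)
  set γ'' : U × V → U × V → ℝ := fun x y => (1 + s) * γ x y - s * γ' x y with hγ''def
  have hγ''eq : ∀ x y, γ'' x y = (1 + s) * γ x y + (-s) * γ' x y := by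
    intro x y; simp [hγ''def]; ring
  have hγ''pos : ∀ x y, 0 ≤ γ'' x y := by
    intro x y
    by_cases h : γ x y < γ' x y
    · have hmem : ((x,y) : (U × V) × (U × V)) ∈ S := by simp [hSdef, h]
      have hmin := hσ₀min _ hmem
      have hd : (0:ℝ) < γ' x y - γ x y := by linarith
      have : s * (γ' x y - γ x y) ≤ γ x y := by
        calc s * (γ' x y - γ x y) ≤ (γ x y / (γ' x y - γ x y)) * (γ' x y - γ x y) := by
              apply mul_le_mul_of_nonneg_right hmin (le_of_lt hd)
          _ = γ x y := div_mul_cancel₀ _ (ne_of_gt hd)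
      simp only [hγ''def]; nlinarith [hγpos x y]
    · push_neg at h
      simp only [hγ''def]
      nlinarith [hγpos x y, hγ'pos x y]
  have hmem'' : IsWeightJoining α β γ'' :=
    affine_mem (by ring) hγ hγ' hγ''eq hγ''pos
  refine ⟨γ'', hmem'', ?_, ?_⟩
  · -- jsupp γ'' ⊆ jsupp γ
    intro σ hσ
    simp only [jsupp, Set.mem_setOf_eq] at hσ ⊢
    by_contra hc
    push_neg at hc
    have h0 : γ σ.1 σ.2 = 0 := le_antisymm hc (hγpos _ _)
    have h0' : γ' σ.1 σ.2 = 0 := hzero _ _ h0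
    simp only [hγ''def, h0, h0'] at hσ
    linarith
  · -- not jsupp γ ⊆ jsupp γ''
    intro hc
    have h1 : σ₀ ∈ jsupp γ'' := hc hσ₀pos
    simp only [jsupp, Set.mem_setOf_eq, hγ''def] at h1
    have hd : (0:ℝ) < γ' σ₀.1 σ₀.2 - γ σ₀.1 σ₀.2 := by linarith
    have hval : s * (γ' σ₀.1 σ₀.2 - γ σ₀.1 σ₀.2) = γ σ₀.1 σ₀.2 := by
      rw [hsdef]; exact div_mul_cancel₀ _ (ne_of_gt hd)
    nlinarith


-- extreme point implies no weight joining has strictly smaller support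
lemma extreme_to_min {U V : Type*} [Fintype U] [Fintype V] {α : U → U → ℝ} {β : V → V → ℝ}
    {γ : U × V → U × V → ℝ} (hγ : γ ∈ weightJoinings α β)
    (hext : IsExtremePointOf (weightJoinings α β) γ) :
    ¬ ∃ γ' ∈ weightJoinings α β, jsupp γ' ⊂ jsupp γ := by
  rintro ⟨γ', hγ'J, hss⟩
  have hγJ : IsWeightJoining α β γ := hγ
  have hγ'J' : IsWeightJoining α β γ' := hγ'J
  have hγpos := hγJ.1.1
  have hγ'pos := hγ'J'.1.1
  classical
  -- support of γ is nonempty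
  have hsum1 : ∑ σ : (U × V) × (U × V), γ σ.1 σ.2 = 1 := by
    rw [Fintype.sum_prod_type]; exact hγJ.1.2.2
  have hSne : ∃ σ : (U × V) × (U × V), 0 < γ σ.1 σ.2 := by
    by_contra hc
    push_neg at hc
    have : ∑ σ : (U × V) × (U × V), γ σ.1 σ.2 = 0 :=
      Finset.sum_eq_zero (fun σ _ => le_antisymm (hc σ) (hγpos σ.1 σ.2))
    rw [this] at hsum1; norm_num at hsum1
  set S : Finset ((U × V) × (U × V)) :=
    Finset.univ.filter (fun σ => 0 < γ σ.1 σ.2) with hSdef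
  have hSne' : S.Nonempty := by
    obtain ⟨σ, hσ⟩ := hSne; exact ⟨σ, by simp [hSdef, hσ]⟩
  obtain ⟨σm, hσmS, hσmmin⟩ := Finset.exists_min_image S (fun σ => γ σ.1 σ.2) hSne'
  obtain ⟨σM, hσMS, hσMmax⟩ := Finset.exists_max_image S (fun σ => γ' σ.1 σ.2) hSne'
  set m : ℝ := γ σm.1 σm.2 with hmdef
  set M : ℝ := γ' σM.1 σM.2 with hMdef
  have hm : 0 < m := by simpa [hSdef] using hσmS
  have hM : 0 ≤ M := hγ'pos σM.1 σM.2
  set s : ℝ := m / (m + M) with hsdef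
  have hsum0 : (0:ℝ) < m + M := by linarith
  have hspos : 0 < s := div_pos hm hsum0
  have hzero : ∀ x y, γ x y = 0 → γ' x y = 0 := by
    intro x y h0
    by_contra hne'
    have h1 : (0:ℝ) < γ' x y := lt_of_le_of_ne (hγ'pos x y) (Ne.symm hne')
    have := hss.1 (show ((x,y):(U×V)×(U×V)) ∈ jsupp γ' from h1)
    simp only [jsupp, Set.mem_setOf_eq] at this
    rw [h0] at this; exact lt_irrefl 0 this
  set η : U × V → U × V → ℝ := fun x y => (1 + s) * γ x y - s * γ' x y with hηdef
  have hηeq : ∀ x y, η x y = (1 + s) * γ x y + (-s) * γ' x y := by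
    intro x y; simp only [hηdef]; ring
  have hηpos : ∀ x y, 0 ≤ η x y := by
    intro x y
    by_cases h : 0 < γ x y
    · have hmem : ((x,y) : (U × V) × (U × V)) ∈ S := by simp [hSdef, h]
      have h1 : m ≤ γ x y := hσmmin _ hmem
      have h2 : γ' x y ≤ M := hσMmax _ hmem
      have h3 : s * γ' x y ≤ s * M := by nlinarith
      have h4 : s * M ≤ m := by
        rw [hsdef]
        rw [div_mul_eq_mul_div, div_le_iff₀ hsum0]
        nlinarith
      simp only [hηdef]
      nlinarith
    · push_neg at h
      have h0 : γ x y = 0 := le_antisymm h (hγpos x y)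
      have h0' : γ' x y = 0 := hzero x y h0
      simp [hηdef, h0, h0']
  have hηJ : IsWeightJoining α β η := affine_mem (by ring) hγJ hγ'J' hηeq hηpos
  set t : ℝ := 1 / (1 + s) with htdef
  have h1s : (0:ℝ) < 1 + s := by linarith
  have ht0 : 0 < t := by positivity
  have ht1 : t < 1 := by
    rw [htdef, div_lt_one h1s]; linarith
  have hdecomp : γ = t • η + (1 - t) • γ' := by
    funext x y
    simp only [Pi.add_apply, Pi.smul_apply, smul_eq_mul, hηdef, htdef]
    field_simp
    ring
  obtain ⟨-, hγeq⟩ := hext.2 η hηJ γ' hγ'J t ht0 ht1 hdecomp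
  -- contradiction: supports differ
  obtain ⟨σ, hσγ, hσγ'⟩ := Set.exists_of_ssubset hss
  exact hσγ' (by rw [← hγeq]; exact hσγ)


lemma min_to_extreme {U V : Type*} [Fintype U] [Fintype V] {α : U → U → ℝ} {β : V → V → ℝ}
    {γ : U × V → U × V → ℝ} (hγ : γ ∈ weightJoinings α β)
    (hmin : ¬ ∃ γ' ∈ weightJoinings α β, jsupp γ' ⊂ jsupp γ) :
    IsExtremePointOf (weightJoinings α β) γ := by
  refine ⟨hγ, ?_⟩
  intro γ₁ h₁ γ₂ h₂ t ht0 ht1 heq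
  have hγJ : IsWeightJoining α β γ := hγ
  have hpt : ∀ x y, γ x y = t * γ₁ x y + (1 - t) * γ₂ x y := by
    intro x y; rw [heq]; simp
  have h1pos := (h₁ : IsWeightJoining α β γ₁).1.1
  have h2pos := (h₂ : IsWeightJoining α β γ₂).1.1
  have hsub1 : jsupp γ₁ ⊆ jsupp γ := by
    intro σ hσ
    simp only [jsupp, Set.mem_setOf_eq] at hσ ⊢
    rw [hpt]
    nlinarith [h2pos σ.1 σ.2]
  have hsub2 : jsupp γ₂ ⊆ jsupp γ := by
    intro σ hσ
    simp only [jsupp, Set.mem_setOf_eq] at hσ ⊢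
    rw [hpt]
    nlinarith [h1pos σ.1 σ.2]
  have he1 : γ = γ₁ := by
    by_contra hne
    obtain ⟨γ'', hJ, hss⟩ := exists_smaller hγJ h₁ hsub1 (fun h => hne h.symm)
    exact hmin ⟨γ'', hJ, hss⟩
  have he2 : γ = γ₂ := by
    by_contra hne
    obtain ⟨γ'', hJ, hss⟩ := exists_smaller hγJ h₂ hsub2 (fun h => hne h.symm)
    exact hmin ⟨γ'', hJ, hss⟩
  exact ⟨he1, he2⟩

/-- A weight joining `γ ∈ J(α,β)` is an extreme point of `J(α,β)`
iff its support is minimal (no weight joining has support strictly contained in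
`supp(γ)`).  Moreover, an extreme point is uniquely determined by its support among
weight joinings. -/
theorem extremePoint_iff_minimal_support
    {U V : Type*} [Fintype U] [Fintype V]
    (α : U → U → ℝ) (β : V → V → ℝ)
    (hα : IsWeightFunction α) (hβ : IsWeightFunction β)
    (γ : U × V → U × V → ℝ) (hγ : γ ∈ weightJoinings α β) :
    (IsExtremePointOf (weightJoinings α β) γ ↔
      ¬ ∃ γ' ∈ weightJoinings α β, jsupp γ' ⊂ jsupp γ) ∧
    (IsExtremePointOf (weightJoinings α β) γ →
      ∀ γ' ∈ weightJoinings α β, jsupp γ' = jsupp γ → γ' = γ) := by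
  have hforward : IsExtremePointOf (weightJoinings α β) γ →
      ¬ ∃ γ' ∈ weightJoinings α β, jsupp γ' ⊂ jsupp γ := extreme_to_min hγ
  have hbackward : (¬ ∃ γ' ∈ weightJoinings α β, jsupp γ' ⊂ jsupp γ) →
      IsExtremePointOf (weightJoinings α β) γ := min_to_extreme hγ
  refine ⟨⟨hforward, hbackward⟩, ?_⟩
  intro hext γ' hγ'J hsupp
  by_contra hne
  have hsub : jsupp γ' ⊆ jsupp γ := le_of_eq hsupp
  obtain ⟨γ'', hJ, hss⟩ := exists_smaller (hγ : IsWeightJoining α β γ) hγ'J hsub hne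
  exact hforward hext ⟨γ'', hJ, hss⟩
end

section
/- Let G = (U, α) and H = (V, β) be connected weighted graphs, and let γ ∈ J(α,β) be an extreme point of J(α,β). Then the weighted graph K = (supp(r_γ), γ) is connected; that is, for any two pairs (u,v), (u',v') ∈ U × V with r_γ(u,v) > 0 and r_γ(u',v') > 0, there is a finite sequence of pairs starting at (u,v) and ending at (u',v') such that γ assigns positive weight to each consecutive pair of pairs. -/
open Finset

/-! The set `C` of pairs reachable from `(u, v)` along `γ`-positive edges is closed under
`γ`-edges, in both directions since `γ` is symmetric. So `γ` is the convex combination of its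
restrictions to `C` and to `Cᶜ`, each normalised by its `r_γ`-mass, and both are again joinings:
connectedness of `α` and `β` forces the marginals of any symmetric, transition-coupled weight to
be proportional to `p` and `q`. Extremality makes `γ` equal to its restriction to `C`, so `r_γ`
vanishes off `C`. -/

lemma exists_walk_of_reflTransGen {X : Type*} {r : X → X → Prop} {a b : X}
    (h : Relation.ReflTransGen r a b) :
    ∃ n, ∃ w : Fin (n + 1) → X, w 0 = a ∧ w (Fin.last n) = b ∧
      ∀ i : Fin n, r (w i.castSucc) (w i.succ) := by
  induction h with
  | refl => exact ⟨0, fun _ => a, rfl, rfl, fun i => i.elim0⟩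
  | @tail b c _ hbc ih =>
    obtain ⟨n, w, hw0, hwl, hwr⟩ := ih
    refine ⟨n + 1, Fin.snoc w c, ?_, Fin.snoc_last _ _, Fin.lastCases ?_ fun i => ?_⟩
    · rw [← Fin.castSucc_zero, Fin.snoc_castSucc, hw0]
    · rw [Fin.succ_last, Fin.snoc_castSucc, Fin.snoc_last, hwl]
      exact hbc
    · rw [Fin.succ_castSucc, Fin.snoc_castSucc, Fin.snoc_castSucc]
      exact hwr i

section Marginal

variable {X : Type*} [Fintype X]

lemma le_marginal {η : X → X → ℝ} (hnn : ∀ x y, 0 ≤ η x y) (x y : X) :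
    η x y ≤ marginal η x :=
  single_le_sum (fun y _ => hnn x y) (mem_univ y)

lemma marginal_nonneg {η : X → X → ℝ} (hnn : ∀ x y, 0 ≤ η x y) (x : X) :
    0 ≤ marginal η x :=
  sum_nonneg fun y _ => hnn x y

lemma marginal_smul (c : ℝ) (η : X → X → ℝ) (x : X) :
    marginal (c • η) x = c * marginal η x := by
  simp [marginal, mul_sum]

lemma marginal_indicator (C : Set X) (η : X → X → ℝ) (x : X) :
    marginal (C.indicator η) x = C.indicator (marginal η) x := by
  by_cases hx : x ∈ C <;> simp [marginal, hx]

lemma marginal_indicator_add_compl (C : Set X) (η : X → X → ℝ) :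
    ∑ x, marginal (C.indicator η) x + ∑ x, marginal (Cᶜ.indicator η) x = ∑ x, marginal η x := by
  simp only [← sum_add_distrib, marginal_indicator, Set.indicator_self_add_compl_apply]

lemma sum_marginal_indicator_pos {η : X → X → ℝ} (hnn : ∀ x y, 0 ≤ η x y) {C : Set X}
    {x : X} (hx : x ∈ C) (hpos : 0 < marginal η x) :
    0 < ∑ y, marginal (C.indicator η) y := by
  have hnn' : ∀ y, 0 ≤ marginal (C.indicator η) y := fun y => by
    rw [marginal_indicator]
    exact Set.indicator_nonneg (fun y _ => marginal_nonneg hnn y) y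
  calc 0 < marginal (C.indicator η) x := by rwa [marginal_indicator, Set.indicator_of_mem hx]
    _ ≤ _ := single_le_sum (fun y _ => hnn' y) (mem_univ x)

lemma marginal_swap_s6 {U V : Type*} [Fintype U] [Fintype V] (η : U × V → U × V → ℝ) (x : V × U) :
    marginal (fun x y : V × U => η x.swap y.swap) x = marginal η x.swap :=
  Fintype.sum_equiv (Equiv.prodComm V U) _ _ fun _ => rfl

end Marginal

section Connected

variable {U : Type*} [Fintype U] {α : U → U → ℝ}

lemma IsConnectedWeight.eq_of_forall_pos {Y : Type*} (hconn : IsConnectedWeight α) {f : U → Y}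
    (hf : ∀ u u', 0 < α u u' → f u = f u') (u u' : U) : f u = f u' := by
  rcases eq_or_ne u u' with rfl | hne
  · rfl
  obtain ⟨n, w, rfl, rfl, hw⟩ := hconn u u' hne
  exact Fin.induction (motive := fun i => f (w 0) = f (w i)) rfl
    (fun i hi => hi.trans (hf _ _ (hw i))) (Fin.last n)

lemma IsConnectedWeight.marginal_pos_s6 (hconn : IsConnectedWeight α) (hα : IsWeightFunction α)
    (u : U) : 0 < marginal α u := by
  obtain ⟨u₀, -, hu₀⟩ : ∃ u₀ ∈ univ, (0 : ℝ) < marginal α u₀ :=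
    exists_lt_of_sum_lt (by simp [marginal, hα.2.2])
  have hpos : ∀ u u', 0 < α u u' → 0 < marginal α u :=
    fun u u' h => h.trans_le (le_marginal hα.1 u u')
  have hedge : ∀ u u', 0 < α u u' → (0 < marginal α u) = (0 < marginal α u') :=
    fun u u' h => propext ⟨fun _ => hpos u' u (hα.2.1 u u' ▸ h), fun _ => hpos u u' h⟩
  rwa [hconn.eq_of_forall_pos hedge u u₀]

end Connected

section Joining

variable {U V : Type*} [Fintype U] [Fintype V] {α : U → U → ℝ} {β : V → V → ℝ}

/-- The flux `∑ v v', η (u, v) (u', v')` from the fibre over `u` to the fibre over `u'` is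
symmetric, so the transition coupling gives `α u u' (g u p u' - g u' p u) = 0` for the
`U`-marginal `g` of `η`; connectedness then makes `g / p` constant. -/
lemma sum_marginal_left_eq (hα : IsWeightFunction α) (hconn : IsConnectedWeight α)
    {η : U × V → U × V → ℝ} (hsymm : ∀ x y, η x y = η y x)
    (hη : ∀ u u' v, marginal α u * ∑ v', η (u, v) (u', v') = α u u' * marginal η (u, v))
    (u : U) : ∑ v, marginal η (u, v) = (∑ x, marginal η x) * marginal α u := by
  set p := marginal α
  set g : U → ℝ := fun u => ∑ v, marginal η (u, v)
  have hp : ∀ u, 0 < p u := hconn.marginal_pos_s6 hα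
  have hflux : ∀ u u', α u u' * g u = p u * ∑ v, ∑ v', η (u, v) (u', v') := fun u u' => by
    rw [mul_sum, mul_sum]
    exact sum_congr rfl fun v _ => (hη u u' v).symm
  have hflux_symm : ∀ u u', ∑ v, ∑ v', η (u, v) (u', v') = ∑ v', ∑ v, η (u', v') (u, v) :=
    fun u u' => by
      rw [sum_comm]
      simp only [hsymm (u, _)]
  have hratio : ∀ u u', 0 < α u u' → g u / p u = g u' / p u' := fun u u' h => by
    rw [div_eq_div_iff (hp u).ne' (hp u').ne']
    have h₁ := hflux u u'
    have h₂ := hflux u' u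
    rw [hα.2.1 u' u, ← hflux_symm] at h₂
    refine mul_left_cancel₀ h.ne' ?_
    linear_combination p u' * h₁ - p u * h₂
  have htotal : ∑ x, marginal η x = g u / p u := by
    rw [Fintype.sum_prod_type]
    calc ∑ u', g u' = ∑ u', g u / p u * p u' := sum_congr rfl fun u' _ => by
          rw [hconn.eq_of_forall_pos hratio u u', div_mul_cancel₀ _ (hp u').ne']
      _ = g u / p u := by rw [← mul_sum, show ∑ u', p u' = 1 from hα.2.2, mul_one]
  rw [htotal, div_mul_cancel₀ _ (hp u).ne']

lemma sum_marginal_right_eq (hβ : IsWeightFunction β) (hconn : IsConnectedWeight β)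
    {η : U × V → U × V → ℝ} (hsymm : ∀ x y, η x y = η y x)
    (hη : ∀ v v' u, marginal β v * ∑ u', η (u, v) (u', v') = β v v' * marginal η (u, v))
    (v : V) : ∑ u, marginal η (u, v) = (∑ x, marginal η x) * marginal β v := by
  have h := sum_marginal_left_eq (η := fun x y : V × U => η x.swap y.swap) hβ hconn
    (fun x y => hsymm _ _) (fun v v' u => by rw [marginal_swap_s6]; exact hη v v' u) v
  simp only [marginal_swap_s6] at h
  rwa [← Equiv.sum_comp (Equiv.prodComm U V)] at h

lemma isWeightJoining_inv_smul (hα : IsWeightFunction α) (hβ : IsWeightFunction β)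
    (hGconn : IsConnectedWeight α) (hHconn : IsConnectedWeight β) {η : U × V → U × V → ℝ}
    (hnn : ∀ x y, 0 ≤ η x y) (hsymm : ∀ x y, η x y = η y x)
    (hU : ∀ u u' v, marginal α u * ∑ v', η (u, v) (u', v') = α u u' * marginal η (u, v))
    (hV : ∀ v v' u, marginal β v * ∑ u', η (u, v) (u', v') = β v v' * marginal η (u, v))
    (ht : 0 < ∑ x, marginal η x) :
    IsWeightJoining α β ((∑ x, marginal η x)⁻¹ • η) := by
  refine ⟨⟨fun x y => ?_, fun x y => ?_, ?_⟩, fun u => ?_, fun v => ?_,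
    fun u u' v => ?_, fun v v' u => ?_⟩
  · exact mul_nonneg (inv_nonneg.2 ht.le) (hnn x y)
  · simp only [Pi.smul_apply, smul_eq_mul, hsymm x y]
  · change ∑ z, marginal ((∑ x, marginal η x)⁻¹ • η) z = 1
    simp only [marginal_smul, ← mul_sum]
    exact inv_mul_cancel₀ ht.ne'
  · simp only [marginal_smul, ← mul_sum]
    rw [sum_marginal_left_eq hα hGconn hsymm hU u, inv_mul_cancel_left₀ ht.ne']
  · simp only [marginal_smul, ← mul_sum]
    rw [sum_marginal_right_eq hβ hHconn hsymm hV v, inv_mul_cancel_left₀ ht.ne']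
  · simp only [marginal_smul, Pi.smul_apply, smul_eq_mul, ← mul_sum]
    linear_combination (∑ x, marginal η x)⁻¹ * hU u u' v
  · simp only [marginal_smul, Pi.smul_apply, smul_eq_mul, ← mul_sum]
    linear_combination (∑ x, marginal η x)⁻¹ * hV v v' u

lemma IsWeightJoining.inv_smul_indicator (hα : IsWeightFunction α) (hβ : IsWeightFunction β)
    (hGconn : IsConnectedWeight α) (hHconn : IsConnectedWeight β) {γ : U × V → U × V → ℝ}
    (hJ : IsWeightJoining α β γ) {C : Set (U × V)} (hC : ∀ x ∈ C, ∀ y ∉ C, γ x y = 0)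
    (ht : 0 < ∑ x, marginal (C.indicator γ) x) :
    IsWeightJoining α β ((∑ x, marginal (C.indicator γ) x)⁻¹ • C.indicator γ) := by
  obtain ⟨⟨hnn, hsymm, -⟩, -, -, hU, hV⟩ := hJ
  refine isWeightJoining_inv_smul hα hβ hGconn hHconn (fun x y => ?_) (fun x y => ?_)
    (fun u u' v => ?_) (fun v v' u => ?_) ht
  · by_cases hx : x ∈ C <;> simp [hx, hnn x y]
  · by_cases hx : x ∈ C <;> by_cases hy : y ∈ C
    · simp [hx, hy, hsymm x y]
    · simp [hx, hy, hC x hx y hy]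
    · simp [hx, hy, hC y hy x hx]
    · simp [hx, hy]
  · by_cases hx : (u, v) ∈ C <;> simp [marginal_indicator, hx, hU u u' v]
  · by_cases hx : (u, v) ∈ C <;> simp [marginal_indicator, hx, hV v v' u]

lemma IsExtremePointOf.marginal_eq_zero_of_closed (hα : IsWeightFunction α)
    (hβ : IsWeightFunction β) (hGconn : IsConnectedWeight α) (hHconn : IsConnectedWeight β)
    {γ : U × V → U × V → ℝ} (hext : IsExtremePointOf (weightJoinings α β) γ)
    {C : Set (U × V)} (hC : ∀ x ∈ C, ∀ y ∉ C, γ x y = 0) {x y : U × V} (hx : x ∈ C)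
    (hxpos : 0 < marginal γ x) (hy : y ∉ C) : marginal γ y = 0 := by
  obtain ⟨hJ, hext⟩ := hext
  have hnn : ∀ x y, 0 ≤ γ x y := hJ.1.1
  by_contra hyne
  have hypos := (marginal_nonneg hnn y).lt_of_ne' hyne
  have hCc : ∀ x ∈ Cᶜ, ∀ y ∉ Cᶜ, γ x y = 0 := fun x hx y hy => by
    rw [hJ.1.2.1]
    exact hC y (not_not.1 hy) x hx
  set t₁ := ∑ z, marginal (C.indicator γ) z
  set t₂ := ∑ z, marginal (Cᶜ.indicator γ) z
  have ht₁ : 0 < t₁ := sum_marginal_indicator_pos hnn hx hxpos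
  have ht₂ : 0 < t₂ := sum_marginal_indicator_pos hnn hy hypos
  have hsum : t₁ + t₂ = 1 := (marginal_indicator_add_compl C γ).trans hJ.1.2.2
  have hdecomp : γ = t₁ • (t₁⁻¹ • C.indicator γ) + (1 - t₁) • (t₂⁻¹ • Cᶜ.indicator γ) := by
    rw [show 1 - t₁ = t₂ by linarith, smul_inv_smul₀ ht₁.ne', smul_inv_smul₀ ht₂.ne',
      Set.indicator_self_add_compl]
  obtain ⟨hγ₁, -⟩ := hext _ (hJ.inv_smul_indicator hα hβ hGconn hHconn hC ht₁)
    _ (hJ.inv_smul_indicator hα hβ hGconn hHconn hCc ht₂) t₁ ht₁ (by linarith) hdecomp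
  rw [hγ₁, marginal_smul, marginal_indicator, Set.indicator_of_notMem hy, mul_zero] at hypos
  exact hypos.false

end Joining

/-- If `G = (U,α)` and `H = (V,β)` are connected and `γ` is an
extreme point of `J(α,β)`, then the graph `K = (supp(r_γ), γ)` is connected: any
two pairs of positive marginal are joined by a path of `γ`-positive edges. -/
theorem extreme_weightJoining_connected
    {U V : Type*} [Fintype U] [Fintype V]
    (α : U → U → ℝ) (β : V → V → ℝ)
    (hα : IsWeightFunction α) (hβ : IsWeightFunction β)
    (hGconn : IsConnectedWeight α) (hHconn : IsConnectedWeight β)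
    (γ : U × V → U × V → ℝ)
    (hγ : IsExtremePointOf (weightJoinings α β) γ) :
    ∀ u u' : U, ∀ v v' : V, 0 < marginal γ (u, v) → 0 < marginal γ (u', v') →
      ∃ n, ∃ w : Fin (n + 1) → U × V, w 0 = (u, v) ∧ w (Fin.last n) = (u', v') ∧
        ∀ i : Fin n, 0 < γ (w i.castSucc) (w i.succ) := by
  intro u u' v v' huv hu'v'
  set C := {x | Relation.ReflTransGen (fun a b => 0 < γ a b) (u, v) x}
  suffices (u', v') ∈ C from exists_walk_of_reflTransGen this
  have hnn : ∀ x y, 0 ≤ γ x y := hγ.1.1.1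
  have hC : ∀ x ∈ C, ∀ y ∉ C, γ x y = 0 := fun x hx y hy =>
    ((hnn x y).lt_or_eq.resolve_left fun h => hy (hx.tail h)).symm
  by_contra hout
  exact hu'v'.ne' (hγ.marginal_eq_zero_of_closed hα hβ hGconn hHconn hC
    Relation.ReflTransGen.refl huv hout)
end

section
/- (Gluing Lemma) Let α₁, α₂, α₃ be weight functions on a finite set U with marginals p₁, p₂, p₃. For any weight joinings γ₁₂ ∈ J(α₁, α₂) and γ₂₃ ∈ J(α₂, α₃), there exists a three-way weight joining γ ∈ J(α₁, α₂, α₃) that has γ₁₂ and γ₂₃ as marginals, i.e., ∑_{z,z' ∈ U} γ((x,y,z),(x',y',z')) = γ₁₂((x,y),(x',y')) for all x,x',y,y' ∈ U and ∑_{x,x' ∈ U} γ((x,y,z),(x',y',z')) = γ₂₃((y,z),(y',z')) for all y,y',z,z' ∈ U. -/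
open Finset

/-- A three-way weight joining of weight functions `α₁, α₂, α₃` on `U`: a weight
function on `U × U × U` satisfying the marginal coupling and transition coupling
conditions in each of the three coordinates. -/
def IsWeightJoining3 {U : Type*} [Fintype U]
    (α₁ α₂ α₃ : U → U → ℝ) (γ : U × U × U → U × U × U → ℝ) : Prop :=
  IsWeightFunction γ ∧
  (∀ x, ∑ y, ∑ z, marginal γ (x, y, z) = marginal α₁ x) ∧
  (∀ y, ∑ x, ∑ z, marginal γ (x, y, z) = marginal α₂ y) ∧
  (∀ z, ∑ x, ∑ y, marginal γ (x, y, z) = marginal α₃ z) ∧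
  (∀ x x' y z, marginal α₁ x * ∑ y', ∑ z', γ (x, y, z) (x', y', z') =
    α₁ x x' * marginal γ (x, y, z)) ∧
  (∀ y y' x z, marginal α₂ y * ∑ x', ∑ z', γ (x, y, z) (x', y', z') =
    α₂ y y' * marginal γ (x, y, z)) ∧
  (∀ z z' x y, marginal α₃ z * ∑ x', ∑ y', γ (x, y, z) (x', y', z') =
    α₃ z z' * marginal γ (x, y, z))

/-- **Gluing Lemma.** Given weight joinings `γ₁₂ ∈ J(α₁,α₂)` and
`γ₂₃ ∈ J(α₂,α₃)`, there is a three-way weight joining `γ ∈ J(α₁,α₂,α₃)` admitting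
`γ₁₂` and `γ₂₃` as marginals. -/
theorem gluing_lemma
    {U : Type*} [Fintype U]
    (α₁ α₂ α₃ : U → U → ℝ)
    (hα₁ : IsWeightFunction α₁) (hα₂ : IsWeightFunction α₂) (hα₃ : IsWeightFunction α₃)
    (γ₁₂ : U × U → U × U → ℝ) (hγ₁₂ : IsWeightJoining α₁ α₂ γ₁₂)
    (γ₂₃ : U × U → U × U → ℝ) (hγ₂₃ : IsWeightJoining α₂ α₃ γ₂₃) :
    ∃ γ : U × U × U → U × U × U → ℝ,
      IsWeightJoining3 α₁ α₂ α₃ γ ∧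
      (∀ x x' y y' : U, ∑ z, ∑ z', γ (x, y, z) (x', y', z') = γ₁₂ (x, y) (x', y')) ∧
      (∀ y y' z z' : U, ∑ x, ∑ x', γ (x, y, z) (x', y', z') = γ₂₃ (y, z) (y', z')) := by
  
  classical
  obtain ⟨hα₁nn, hα₁sym, hα₁sum⟩ := hα₁
  obtain ⟨hα₂nn, hα₂sym, hα₂sum⟩ := hα₂
  obtain ⟨⟨h12nn, h12sym, h12sum⟩, h12m1, h12m2, h12t1, h12t2⟩ := hγ₁₂
  obtain ⟨⟨h23nn, h23sym, h23sum⟩, h23m1, h23m2, h23t1, h23t2⟩ := hγ₂₃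
  -- nonneg marginals
  have hr12nn : ∀ p, 0 ≤ marginal γ₁₂ p :=
    fun p => Finset.sum_nonneg fun p' _ => h12nn p p'
  have hr23nn : ∀ p, 0 ≤ marginal γ₂₃ p :=
    fun p => Finset.sum_nonneg fun p' _ => h23nn p p'
  have hm0_12 : ∀ p, marginal γ₁₂ p = 0 → ∀ p', γ₁₂ p p' = 0 := by
    intro p hp p'
    exact (Finset.sum_eq_zero_iff_of_nonneg (fun i _ => h12nn p i)).mp hp p' (mem_univ p')
  have hm0_23 : ∀ p, marginal γ₂₃ p = 0 → ∀ p', γ₂₃ p p' = 0 := by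
    intro p hp p'
    exact (Finset.sum_eq_zero_iff_of_nonneg (fun i _ => h23nn p i)).mp hp p' (mem_univ p')
  have hq0_12 : ∀ x y, marginal α₂ y = 0 → marginal γ₁₂ (x, y) = 0 := by
    intro x y hqy
    have h : ∑ u, marginal γ₁₂ (u, y) = 0 := (h12m2 y).trans hqy
    exact (Finset.sum_eq_zero_iff_of_nonneg (fun i _ => hr12nn (i, y))).mp h x (mem_univ x)
  have hq0_23 : ∀ y z, marginal α₂ y = 0 → marginal γ₂₃ (y, z) = 0 := by
    intro y z hqy
    have h : ∑ v, marginal γ₂₃ (y, v) = 0 := (h23m1 y).trans hqy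
    exact (Finset.sum_eq_zero_iff_of_nonneg (fun i _ => hr23nn (y, i))).mp h z (mem_univ z)
  have hα0_12 : ∀ x y x' y', α₂ y y' = 0 → γ₁₂ (x, y) (x', y') = 0 := by
    intro x y x' y' hα
    by_cases hqy : marginal α₂ y = 0
    · exact hm0_12 _ (hq0_12 x y hqy) _
    · have hT := h12t2 y y' x
      rw [hα, zero_mul] at hT
      have hS : ∑ u', γ₁₂ (x, y) (u', y') = 0 :=
        (mul_eq_zero.mp hT).resolve_left hqy
      exact (Finset.sum_eq_zero_iff_of_nonneg
        (fun i _ => h12nn (x, y) (i, y'))).mp hS x' (mem_univ x')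
  have hα0_23 : ∀ y z y' z', α₂ y y' = 0 → γ₂₃ (y, z) (y', z') = 0 := by
    intro y z y' z' hα
    by_cases hqy : marginal α₂ y = 0
    · exact hm0_23 _ (hq0_23 y z hqy) _
    · have hT := h23t1 y y' z
      rw [hα, zero_mul] at hT
      have hS : ∑ v', γ₂₃ (y, z) (y', v') = 0 :=
        (mul_eq_zero.mp hT).resolve_left hqy
      exact (Finset.sum_eq_zero_iff_of_nonneg
        (fun i _ => h23nn (y, z) (y', i))).mp hS z' (mem_univ z')
  -- the glued joining
  set Γ : U × U × U → U × U × U → ℝ :=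
    fun p p' => γ₁₂ (p.1, p.2.1) (p'.1, p'.2.1) * γ₂₃ (p.2.1, p.2.2) (p'.2.1, p'.2.2)
      / α₂ p.2.1 p'.2.1 with hΓ
  have hΓeval : ∀ x y z x' y' z', Γ (x, y, z) (x', y', z') =
      γ₁₂ (x, y) (x', y') * γ₂₃ (y, z) (y', z') / α₂ y y' := fun _ _ _ _ _ _ => rfl
  have hsplit : ∀ (f : U × U × U → ℝ), ∑ p, f p = ∑ a, ∑ b, ∑ c, f (a, b, c) := by
    intro f
    rw [Fintype.sum_prod_type]
    exact Finset.sum_congr rfl fun a _ => Fintype.sum_prod_type _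
  have hm12split : ∀ x y, marginal γ₁₂ (x, y) = ∑ x', ∑ y', γ₁₂ (x, y) (x', y') :=
    fun x y => Fintype.sum_prod_type _
  -- key partial-sum formulas
  have hz' : ∀ x y z x' y', ∑ z', Γ (x, y, z) (x', y', z')
      = γ₁₂ (x, y) (x', y') * (marginal γ₂₃ (y, z) / marginal α₂ y) := by
    intro x y z x' y'
    by_cases hqy : marginal α₂ y = 0
    · have h23z : ∀ z', γ₂₃ (y, z) (y', z') = 0 := fun z' => hm0_23 _ (hq0_23 y z hqy) _
      simp [hΓeval, h23z, hq0_23 y z hqy]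
    · by_cases hα : α₂ y y' = 0
      · have h12z : γ₁₂ (x, y) (x', y') = 0 := hα0_12 x y x' y' hα
        simp [hΓeval, hα, h12z]
      · have hT := h23t1 y y' z
        simp only [hΓeval]
        rw [← Finset.sum_div, ← Finset.mul_sum]
        have hS : ∑ z', γ₂₃ (y, z) (y', z')
            = α₂ y y' * marginal γ₂₃ (y, z) / marginal α₂ y := by
          field_simp
          linarith [hT]
        rw [hS]
        field_simp
  have hx' : ∀ x y z y' z', ∑ x', Γ (x, y, z) (x', y', z')
      = (marginal γ₁₂ (x, y) / marginal α₂ y) * γ₂₃ (y, z) (y', z') := by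
    intro x y z y' z'
    by_cases hqy : marginal α₂ y = 0
    · have h12z : ∀ x', γ₁₂ (x, y) (x', y') = 0 := fun x' => hm0_12 _ (hq0_12 x y hqy) _
      simp [hΓeval, h12z, hq0_12 x y hqy]
    · by_cases hα : α₂ y y' = 0
      · have h23z : γ₂₃ (y, z) (y', z') = 0 := hα0_23 y z y' z' hα
        simp [hΓeval, hα, h23z]
      · have hT := h12t2 y y' x
        simp only [hΓeval]
        rw [← Finset.sum_div, ← Finset.sum_mul]
        have hS : ∑ x', γ₁₂ (x, y) (x', y')
            = α₂ y y' * marginal γ₁₂ (x, y) / marginal α₂ y := by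
          field_simp
          linarith [hT]
        rw [hS]
        field_simp
  have hrmarg : ∀ x y z, marginal Γ (x, y, z)
      = marginal γ₁₂ (x, y) * (marginal γ₂₃ (y, z) / marginal α₂ y) := by
    intro x y z
    show ∑ p', Γ (x, y, z) p' = _
    rw [hsplit]
    simp only [hz', ← Finset.sum_mul]
    rw [hm12split]
  have hsum_z : ∀ x y, ∑ z, marginal Γ (x, y, z) = marginal γ₁₂ (x, y) := by
    intro x y
    simp only [hrmarg]
    rw [← Finset.mul_sum, ← Finset.sum_div, h23m1 y]
    by_cases hqy : marginal α₂ y = 0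
    · rw [hq0_12 x y hqy]; simp
    · rw [div_self hqy, mul_one]
  have hsum_x : ∀ y z, ∑ x, marginal Γ (x, y, z) = marginal γ₂₃ (y, z) := by
    intro y z
    simp only [hrmarg]
    rw [← Finset.sum_mul, h12m2 y]
    by_cases hqy : marginal α₂ y = 0
    · rw [hq0_23 y z hqy]; simp [hqy]
    · rw [div_eq_mul_inv, ← mul_assoc, mul_comm (marginal α₂ y), mul_assoc,
        mul_inv_cancel₀ hqy, mul_one]
  refine ⟨Γ, ⟨⟨?_, ?_, ?_⟩, ?_, ?_, ?_, ?_, ?_, ?_⟩, ?_, ?_⟩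
  · -- nonneg
    intro u u'
    exact div_nonneg (mul_nonneg (h12nn _ _) (h23nn _ _)) (hα₂nn _ _)
  · -- symmetry
    rintro ⟨x, y, z⟩ ⟨x', y', z'⟩
    rw [hΓeval, hΓeval, h12sym, h23sym, hα₂sym]
  · -- total sum 1
    have key : ∑ u : U × U × U, marginal Γ u = 1 := by
      rw [hsplit]
      simp only [hsum_z]
      simp only [h12m1]
      exact hα₁sum
    exact key
  · -- marginal coupling 1
    intro x
    simp only [hsum_z]
    exact h12m1 x
  · -- marginal coupling 2
    intro y
    simp only [hsum_z]
    exact h12m2 y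
  · -- marginal coupling 3
    intro z
    rw [Finset.sum_comm]
    simp only [hsum_x]
    exact h23m2 z
  · -- transition 1
    intro x x' y z
    simp only [hz', ← Finset.sum_mul]
    rw [hrmarg, ← mul_assoc, h12t1 x x' y, mul_assoc]
  · -- transition 2
    intro y y' x z
    simp only [hz', ← Finset.sum_mul]
    rw [hrmarg, ← mul_assoc, h12t2 y y' x, mul_assoc]
  · -- transition 3
    intro z z' x y
    rw [Finset.sum_comm]
    simp only [hx', ← Finset.mul_sum]
    rw [hrmarg, mul_left_comm, h23t2 z z' y]
    ring
  · -- γ₁₂ marginal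
    intro x x' y y'
    simp only [hz', ← Finset.mul_sum, ← Finset.sum_div]
    rw [h23m1 y]
    by_cases hqy : marginal α₂ y = 0
    · rw [hm0_12 _ (hq0_12 x y hqy) _]; simp
    · rw [div_self hqy, mul_one]
  · -- γ₂₃ marginal
    intro y y' z z'
    simp only [hx', ← Finset.sum_mul, ← Finset.sum_div]
    rw [h12m2 y]
    by_cases hqy : marginal α₂ y = 0
    · rw [hm0_23 _ (hq0_23 y z hqy) _]; simp [hqy]
    · rw [div_self hqy, one_mul]
end

section
/- Let U be a finite set, let c : U × U → ℝ be a metric on U, and let κ ≥ 1. For weighted graphs G = (U,α) and H = (U,β) on the common vertex set U, define the κ-OGJ distance ρ_κ(G,H) = min_{γ ∈ J(α,β)} ( ∑_{(u,u') ∈ U × U} c(u,u')^κ · r_γ(u,u') )^{1/κ}. Then ρ_κ is a metric on the family of weighted graphs on U: it is nonnegative, symmetric, satisfies ρ_κ(G,H) = 0 if and only if α = β, and satisfies the triangle inequality ρ_κ(G₁,G₃) ≤ ρ_κ(G₁,G₂) + ρ_κ(G₂,G₃). -/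
open Finset

section Basic

variable {U V : Type*} [Fintype U] [Fintype V]

lemma marginal_nonneg_s8 {α : U → U → ℝ} (h : ∀ u u', 0 ≤ α u u') (u : U) :
    0 ≤ marginal α u := Finset.sum_nonneg fun _ _ => h _ _

lemma le_marginal_s8 {α : U → U → ℝ} (h : ∀ u u', 0 ≤ α u u') (u u' : U) :
    α u u' ≤ marginal α u :=
  Finset.single_le_sum (f := fun x => α u x) (fun _ _ => h _ _) (mem_univ u')

lemma sum_marginal (α : U → U → ℝ) : ∑ u, marginal α u = ∑ u, ∑ u', α u u' := rfl

lemma marginal_le_one {α : U → U → ℝ} (hα : IsWeightFunction α) (u : U) :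
    marginal α u ≤ 1 := by
  rw [← hα.2.2]
  exact Finset.single_le_sum (f := fun x => marginal α x)
    (fun _ _ => marginal_nonneg_s8 hα.1 _) (mem_univ u)

lemma wf_le_one {α : U → U → ℝ} (hα : IsWeightFunction α) (u u' : U) :
    α u u' ≤ 1 := (le_marginal_s8 hα.1 u u').trans (marginal_le_one hα u)

lemma eq_zero_of_marginal_eq_zero {α : U → U → ℝ} (h : ∀ u u', 0 ≤ α u u')
    {u : U} (hm : marginal α u = 0) (u' : U) : α u u' = 0 := by
  have := (Finset.sum_eq_zero_iff_of_nonneg (fun x _ => h u x)).mp hm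
  exact this u' (mem_univ u')

/-- Helper: split a sum over a product type. -/
lemma marginal_prod (γ : U × V → U × V → ℝ) (x : U × V) :
    marginal γ x = ∑ u', ∑ v', γ x (u', v') := by
  rw [marginal, Fintype.sum_prod_type]

end Basic

section Joining

variable {U V : Type*} [Fintype U] [Fintype V]
  {α : U → U → ℝ} {β : V → V → ℝ} {γ : U × V → U × V → ℝ}

lemma j_γ_nonneg (hγ : IsWeightJoining α β γ) (x y : U × V) : 0 ≤ γ x y := hγ.1.1 x y

lemma j_r_nonneg (hγ : IsWeightJoining α β γ) (x : U × V) : 0 ≤ marginal γ x :=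
  marginal_nonneg_s8 hγ.1.1 x

lemma j_γ_le_r (hγ : IsWeightJoining α β γ) (x y : U × V) : γ x y ≤ marginal γ x :=
  le_marginal_s8 hγ.1.1 x y

lemma j_γ_le_r' (hγ : IsWeightJoining α β γ) (x y : U × V) : γ x y ≤ marginal γ y := by
  rw [hγ.1.2.1 x y]; exact le_marginal_s8 hγ.1.1 y x

lemma j_r_le_p (hγ : IsWeightJoining α β γ) (u : U) (v : V) :
    marginal γ (u, v) ≤ marginal α u := by
  rw [← hγ.2.1 u]
  exact Finset.single_le_sum (f := fun x => marginal γ (u, x))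
    (fun _ _ => j_r_nonneg hγ _) (mem_univ v)

lemma j_r_le_q (hγ : IsWeightJoining α β γ) (u : U) (v : V) :
    marginal γ (u, v) ≤ marginal β v := by
  rw [← hγ.2.2.1 v]
  exact Finset.single_le_sum (f := fun x => marginal γ (x, v))
    (fun _ _ => j_r_nonneg hγ _) (mem_univ u)

lemma j_p_nonneg (hγ : IsWeightJoining α β γ) (u : U) : 0 ≤ marginal α u := by
  rw [← hγ.2.1 u]; exact Finset.sum_nonneg fun _ _ => j_r_nonneg hγ _

lemma j_q_nonneg (hγ : IsWeightJoining α β γ) (v : V) : 0 ≤ marginal β v := by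
  rw [← hγ.2.2.1 v]; exact Finset.sum_nonneg fun _ _ => j_r_nonneg hγ _

lemma j_r_eq_zero_of_q (hγ : IsWeightJoining α β γ) {v : V} (hq : marginal β v = 0)
    (u : U) : marginal γ (u, v) = 0 :=
  le_antisymm (hq ▸ j_r_le_q hγ u v) (j_r_nonneg hγ _)

lemma j_r_eq_zero_of_p (hγ : IsWeightJoining α β γ) {u : U} (hp : marginal α u = 0)
    (v : V) : marginal γ (u, v) = 0 :=
  le_antisymm (hp ▸ j_r_le_p hγ u v) (j_r_nonneg hγ _)

/-- If `β v v' = 0` then all transitions of `γ` from `(u,v)` to second coordinate `v'` vanish. -/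
lemma j_γ_eq_zero_of_β (hγ : IsWeightJoining α β γ) {v v' : V} (hβ : β v v' = 0)
    (u u' : U) : γ (u, v) (u', v') = 0 := by
  have key := hγ.2.2.2.2 v v' u
  rw [hβ, zero_mul] at key
  rcases eq_or_lt_of_le (j_q_nonneg hγ v) with hq | hq
  · have hr := j_r_eq_zero_of_q hγ hq.symm u
    exact le_antisymm (hr ▸ j_γ_le_r hγ _ _) (j_γ_nonneg hγ _ _)
  · have hsum : ∑ u'', γ (u, v) (u'', v') = 0 := by
      rcases mul_eq_zero.mp key with h | h
      · exact absurd h (ne_of_gt hq)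
      · exact h
    exact (Finset.sum_eq_zero_iff_of_nonneg (fun x _ => j_γ_nonneg hγ _ _)).mp hsum u' (mem_univ u')

lemma j_γ_eq_zero_of_α (hγ : IsWeightJoining α β γ) {u u' : U} (hα : α u u' = 0)
    (v v' : V) : γ (u, v) (u', v') = 0 := by
  have key := hγ.2.2.2.1 u u' v
  rw [hα, zero_mul] at key
  rcases eq_or_lt_of_le (j_p_nonneg hγ u) with hp | hp
  · have hr := j_r_eq_zero_of_p hγ hp.symm v
    exact le_antisymm (hr ▸ j_γ_le_r hγ _ _) (j_γ_nonneg hγ _ _)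
  · have hsum : ∑ v'', γ (u, v) (u', v'') = 0 := by
      rcases mul_eq_zero.mp key with h | h
      · exact absurd h (ne_of_gt hp)
      · exact h
    exact (Finset.sum_eq_zero_iff_of_nonneg (fun x _ => j_γ_nonneg hγ _ _)).mp hsum v' (mem_univ v')

end Joining

section Constructions

variable {U V : Type*} [Fintype U] [Fintype V]

/-- The independent joining. -/
noncomputable def indepJ (α : U → U → ℝ) (β : V → V → ℝ) : U × V → U × V → ℝ :=
  fun x y => α x.1 y.1 * β x.2 y.2

lemma marginal_indepJ (α : U → U → ℝ) (β : V → V → ℝ) (x : U × V) :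
    marginal (indepJ α β) x = marginal α x.1 * marginal β x.2 := by
  rw [marginal_prod, marginal, marginal, Finset.sum_mul_sum]
  rfl

lemma sum_marginal_wf {α : U → U → ℝ} (hα : IsWeightFunction α) :
    ∑ u, marginal α u = 1 := hα.2.2

lemma indepJ_isJoining {α : U → U → ℝ} {β : V → V → ℝ}
    (hα : IsWeightFunction α) (hβ : IsWeightFunction β) :
    IsWeightJoining α β (indepJ α β) := by
  refine ⟨⟨fun x y => mul_nonneg (hα.1 _ _) (hβ.1 _ _),
      fun x y => by simp only [indepJ, hα.2.1 x.1 y.1, hβ.2.1 x.2 y.2], ?_⟩, ?_, ?_, ?_, ?_⟩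
  · have : ∀ x : U × V, ∑ y, indepJ α β x y = marginal α x.1 * marginal β x.2 :=
      marginal_indepJ α β
    calc ∑ x : U × V, ∑ y, indepJ α β x y = ∑ x : U × V, marginal α x.1 * marginal β x.2 := by
          exact Finset.sum_congr rfl fun x _ => this x
      _ = (∑ u, marginal α u) * (∑ v, marginal β v) := by
          rw [Finset.sum_mul_sum, Fintype.sum_prod_type]
      _ = 1 := by rw [sum_marginal_wf hα, sum_marginal_wf hβ, one_mul]
  · intro u
    simp only [marginal_indepJ]
    rw [← Finset.mul_sum, sum_marginal_wf hβ, mul_one]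
  · intro v
    simp only [marginal_indepJ]
    rw [← Finset.sum_mul, sum_marginal_wf hα, one_mul]
  · intro u u' v
    simp only [marginal_indepJ, indepJ]
    rw [← Finset.mul_sum]
    unfold marginal
    ring
  · intro v v' u
    simp only [marginal_indepJ, indepJ]
    rw [← Finset.sum_mul]
    unfold marginal
    ring

/-- The diagonal (identity) self-joining. -/
noncomputable def diagJ [DecidableEq U] (α : U → U → ℝ) : U × U → U × U → ℝ :=
  fun x y => if x.1 = x.2 ∧ y.1 = y.2 then α x.1 y.1 else 0

lemma marginal_diagJ [DecidableEq U] (α : U → U → ℝ) (x : U × U) :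
    marginal (diagJ α) x = if x.1 = x.2 then marginal α x.1 else 0 := by
  rw [marginal_prod]
  by_cases h : x.1 = x.2
  · rw [if_pos h]
    simp only [diagJ, h, true_and]
    unfold marginal
    apply Finset.sum_congr rfl
    intro u' _
    simp [← h]
  · simp [diagJ, h]

lemma diagJ_isJoining [DecidableEq U] {α : U → U → ℝ} (hα : IsWeightFunction α) :
    IsWeightJoining α α (diagJ α) := by
  have hmd := marginal_diagJ α
  refine ⟨⟨fun x y => by unfold diagJ; split_ifs with h; exacts [hα.1 _ _, le_refl 0],
      fun x y => by
        unfold diagJ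
        by_cases h1 : x.1 = x.2 <;> by_cases h2 : y.1 = y.2 <;> simp [h1, h2] <;>
          exact hα.2.1 _ _, ?_⟩, ?_, ?_, ?_, ?_⟩
  · calc ∑ x : U × U, ∑ y, diagJ α x y = ∑ x : U × U, marginal (diagJ α) x := rfl
      _ = ∑ u, ∑ v, (if u = v then marginal α u else 0) := by
          rw [Fintype.sum_prod_type]
          exact Finset.sum_congr rfl fun u _ => Finset.sum_congr rfl fun v _ => hmd (u, v)
      _ = ∑ u, marginal α u := by
          apply Finset.sum_congr rfl; intro u _
          simp
      _ = 1 := sum_marginal_wf hα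
  · intro u
    simp [hmd]
  · intro v
    simp [hmd]
  · intro u u' v
    have : ∑ v', diagJ α (u, v) (u', v') = if u = v then α u u' else 0 := by
      unfold diagJ
      by_cases h : u = v
      · simp [h]
      · simp [h]
    rw [this, hmd]
    by_cases h : u = v <;> simp [h, mul_comm]
  · intro v v' u
    have : ∑ u', diagJ α (u, v) (u', v') = if u = v then α u v' else 0 := by
      unfold diagJ
      by_cases h : u = v
      · simp [h]
      · simp [h]
    rw [this, hmd]
    by_cases h : u = v <;> simp [h, mul_comm]

/-- Swapping the two factors of a joining. -/
noncomputable def swapJ (γ : U × V → U × V → ℝ) : V × U → V × U → ℝ :=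
  fun x y => γ (x.2, x.1) (y.2, y.1)

lemma marginal_swapJ (γ : U × V → U × V → ℝ) (x : V × U) :
    marginal (swapJ γ) x = marginal γ (x.2, x.1) := by
  rw [marginal, marginal]
  exact Fintype.sum_equiv (Equiv.prodComm V U) _ _ (fun y => rfl)

lemma swapJ_isJoining {α : U → U → ℝ} {β : V → V → ℝ} {γ : U × V → U × V → ℝ}
    (hγ : IsWeightJoining α β γ) : IsWeightJoining β α (swapJ γ) := by
  obtain ⟨⟨h0, hs, h1⟩, hm1, hm2, ht1, ht2⟩ := hγ
  refine ⟨⟨fun x y => h0 _ _, fun x y => hs _ _, ?_⟩, ?_, ?_, ?_, ?_⟩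
  · rw [← h1]
    exact Fintype.sum_equiv (Equiv.prodComm V U) _ _
      (fun x => Fintype.sum_equiv (Equiv.prodComm V U) _ _ (fun y => rfl))
  · intro v
    simp only [marginal_swapJ]
    exact hm2 v
  · intro u
    simp only [marginal_swapJ]
    exact hm1 u
  · intro v v' u
    simp only [marginal_swapJ, swapJ]
    exact ht2 v v' u
  · intro u u' v
    simp only [marginal_swapJ, swapJ]
    exact ht1 u u' v

end Constructions

section SumHelpers

variable {ι κ' : Type*} [Fintype ι] [Fintype κ']

lemma sum_mul_div' (b : ι → ℝ) (a d : ℝ) :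
    ∑ j, a * b j / d = a * (∑ j, b j) / d := by
  rw [← Finset.sum_div, ← Finset.mul_sum]

lemma sum_div_mul' (b : ι → ℝ) (a d : ℝ) :
    ∑ j, b j * a / d = (∑ j, b j) * a / d := by
  rw [← Finset.sum_div, ← Finset.sum_mul]

lemma sum_sum_mul_div (a : ι → ℝ) (b : κ' → ℝ) (d : ℝ) :
    ∑ i, ∑ j, a i * b j / d = (∑ i, a i) * (∑ j, b j) / d := by
  calc ∑ i, ∑ j, a i * b j / d = ∑ i, a i * (∑ j, b j) / d := by
        exact Finset.sum_congr rfl fun i _ => sum_mul_div' b (a i) d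
    _ = (∑ i, a i) * (∑ j, b j) / d := sum_div_mul' a ((∑ j, b j)) d

/-- Weighted Minkowski inequality over a fintype. -/
lemma weighted_minkowski {κ : ℝ} (hκ : 1 ≤ κ)
    (a b ρ : ι → ℝ) (ha : ∀ i, 0 ≤ a i) (hb : ∀ i, 0 ≤ b i) (hρ : ∀ i, 0 ≤ ρ i) :
    (∑ i, (a i + b i) ^ κ * ρ i) ^ (1/κ) ≤
      (∑ i, a i ^ κ * ρ i) ^ (1/κ) + (∑ i, b i ^ κ * ρ i) ^ (1/κ) := by
  have hκ0 : 0 < κ := lt_of_lt_of_le one_pos hκ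
  have hρκ : ∀ i, (ρ i ^ (1/κ)) ^ κ = ρ i := fun i => by
    rw [← Real.rpow_mul (hρ i), one_div_mul_cancel (ne_of_gt hκ0), Real.rpow_one]
  have key : ∀ (x : ℝ), 0 ≤ x → ∀ i : ι, (x * ρ i ^ (1/κ)) ^ κ = x ^ κ * ρ i := by
    intro x hx i
    rw [Real.mul_rpow hx (Real.rpow_nonneg (hρ i) _), hρκ i]
  have M := Real.Lp_add_le (Finset.univ : Finset ι)
    (fun i => a i * ρ i ^ (1/κ)) (fun i => b i * ρ i ^ (1/κ)) hκ
  have e1 : ∑ i, |a i * ρ i ^ (1/κ) + b i * ρ i ^ (1/κ)| ^ κ = ∑ i, (a i + b i) ^ κ * ρ i := by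
    apply Finset.sum_congr rfl
    intro i _
    rw [← add_mul, abs_of_nonneg (mul_nonneg (add_nonneg (ha i) (hb i))
      (Real.rpow_nonneg (hρ i) _)), key _ (add_nonneg (ha i) (hb i)) i]
  have e2 : ∑ i, |a i * ρ i ^ (1/κ)| ^ κ = ∑ i, a i ^ κ * ρ i := by
    apply Finset.sum_congr rfl
    intro i _
    rw [abs_of_nonneg (mul_nonneg (ha i) (Real.rpow_nonneg (hρ i) _)), key _ (ha i) i]
  have e3 : ∑ i, |b i * ρ i ^ (1/κ)| ^ κ = ∑ i, b i ^ κ * ρ i := by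
    apply Finset.sum_congr rfl
    intro i _
    rw [abs_of_nonneg (mul_nonneg (hb i) (Real.rpow_nonneg (hρ i) _)), key _ (hb i) i]
  rw [e1, e2, e3] at M
  exact M

lemma sum4_swap {ι₁ ι₂ ι₃ ι₄ : Type*} [Fintype ι₁] [Fintype ι₂] [Fintype ι₃] [Fintype ι₄]
    (F : ι₁ → ι₂ → ι₃ → ι₄ → ℝ) :
    ∑ a, ∑ b, ∑ c, ∑ d, F a b c d = ∑ c, ∑ d, ∑ a, ∑ b, F a b c d :=
  calc ∑ a, ∑ b, ∑ c, ∑ d, F a b c d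
      = ∑ a, ∑ c, ∑ b, ∑ d, F a b c d :=
        Finset.sum_congr rfl fun a _ => Finset.sum_comm
    _ = ∑ c, ∑ a, ∑ b, ∑ d, F a b c d := Finset.sum_comm
    _ = ∑ c, ∑ a, ∑ d, ∑ b, F a b c d :=
        Finset.sum_congr rfl fun c _ => Finset.sum_congr rfl fun a _ => Finset.sum_comm
    _ = ∑ c, ∑ d, ∑ a, ∑ b, F a b c d :=
        Finset.sum_congr rfl fun c _ => Finset.sum_comm

lemma sum3_swap {ι₁ ι₂ ι₃ : Type*} [Fintype ι₁] [Fintype ι₂] [Fintype ι₃]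
    (F : ι₁ → ι₂ → ι₃ → ℝ) :
    ∑ a, ∑ b, ∑ c, F a b c = ∑ c, ∑ a, ∑ b, F a b c :=
  calc ∑ a, ∑ b, ∑ c, F a b c
      = ∑ a, ∑ c, ∑ b, F a b c := Finset.sum_congr rfl fun a _ => Finset.sum_comm
    _ = ∑ c, ∑ a, ∑ b, F a b c := Finset.sum_comm

lemma sum3_rot {ι₁ ι₂ ι₃ : Type*} [Fintype ι₁] [Fintype ι₂] [Fintype ι₃]
    (F : ι₁ → ι₂ → ι₃ → ℝ) :
    ∑ a, ∑ b, ∑ c, F a b c = ∑ b, ∑ c, ∑ a, F a b c :=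
  calc ∑ a, ∑ b, ∑ c, F a b c
      = ∑ b, ∑ a, ∑ c, F a b c := Finset.sum_comm
    _ = ∑ b, ∑ c, ∑ a, F a b c := Finset.sum_congr rfl fun b _ => Finset.sum_comm

end SumHelpers

section Glue

variable {U : Type*} [Fintype U]

/-- The glued joining of `γ₁₂ ∈ J(α₁,α₂)` and `γ₂₃ ∈ J(α₂,α₃)`. -/
noncomputable def glueJ (α₂ : U → U → ℝ) (γ₁₂ γ₂₃ : U × U → U × U → ℝ) :
    U × U → U × U → ℝ :=
  fun x y => ∑ v, ∑ v', γ₁₂ (x.1, v) (y.1, v') * γ₂₃ (v, x.2) (v', y.2) / α₂ v v'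

variable {α₁ α₂ α₃ : U → U → ℝ} {γ₁₂ γ₂₃ : U × U → U × U → ℝ}

lemma glue_f1 (h12 : IsWeightJoining α₁ α₂ γ₁₂) {v : U} (hq : marginal α₂ v = 0)
    (u : U) (y : U × U) : γ₁₂ (u, v) y = 0 :=
  le_antisymm ((j_γ_le_r h12 _ _).trans_eq (j_r_eq_zero_of_q h12 hq u)) (j_γ_nonneg h12 _ _)

lemma glue_f2 (h23 : IsWeightJoining α₂ α₃ γ₂₃) {v : U} (hq : marginal α₂ v = 0)
    (w : U) (y : U × U) : γ₂₃ (v, w) y = 0 :=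
  le_antisymm ((j_γ_le_r h23 _ _).trans_eq (j_r_eq_zero_of_p h23 hq w)) (j_γ_nonneg h23 _ _)

/-- Pointwise identity for the marginal computation. -/
lemma glue_key2 (h12 : IsWeightJoining α₁ α₂ γ₁₂) (h23 : IsWeightJoining α₂ α₃ γ₂₃)
    (u w v v' : U) :
    (∑ u', γ₁₂ (u, v) (u', v')) * (∑ w', γ₂₃ (v, w) (v', w')) / α₂ v v'
      = α₂ v v' * (marginal γ₁₂ (u, v) * marginal γ₂₃ (v, w) /
          (marginal α₂ v * marginal α₂ v)) := by
  by_cases hq : marginal α₂ v = 0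
  · rw [j_r_eq_zero_of_q h12 hq u]
    have : ∑ u', γ₁₂ (u, v) (u', v') = 0 :=
      Finset.sum_eq_zero fun u' _ => glue_f1 h12 hq u _
    rw [this]
    simp
  · by_cases ha : α₂ v v' = 0
    · have : ∑ u', γ₁₂ (u, v) (u', v') = 0 :=
        Finset.sum_eq_zero fun u' _ => j_γ_eq_zero_of_β h12 ha u u'
      rw [this, ha]
      simp
    · have e1 : ∑ u', γ₁₂ (u, v) (u', v')
          = α₂ v v' * marginal γ₁₂ (u, v) / marginal α₂ v := by
        rw [← h12.2.2.2.2 v v' u]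
        field_simp
      have e2 : ∑ w', γ₂₃ (v, w) (v', w')
          = α₂ v v' * marginal γ₂₃ (v, w) / marginal α₂ v := by
        rw [← h23.2.2.2.1 v v' w]
        field_simp
      rw [e1, e2]
      field_simp

lemma marginal_glueJ (h12 : IsWeightJoining α₁ α₂ γ₁₂) (h23 : IsWeightJoining α₂ α₃ γ₂₃)
    (u w : U) :
    marginal (glueJ α₂ γ₁₂ γ₂₃) (u, w)
      = ∑ v, marginal γ₁₂ (u, v) * marginal γ₂₃ (v, w) / marginal α₂ v := by
  rw [marginal_prod]
  have step1 : ∀ u' w', glueJ α₂ γ₁₂ γ₂₃ (u, w) (u', w')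
      = ∑ v, ∑ v', γ₁₂ (u, v) (u', v') * γ₂₃ (v, w) (v', w') / α₂ v v' := fun _ _ => rfl
  calc ∑ u', ∑ w', glueJ α₂ γ₁₂ γ₂₃ (u, w) (u', w')
      = ∑ v, ∑ v', ∑ u', ∑ w', γ₁₂ (u, v) (u', v') * γ₂₃ (v, w) (v', w') / α₂ v v' := by
        simp only [step1]
        exact sum4_swap fun u' w' v v' => γ₁₂ (u, v) (u', v') * γ₂₃ (v, w) (v', w') / α₂ v v'
    _ = ∑ v, ∑ v', (∑ u', γ₁₂ (u, v) (u', v')) * (∑ w', γ₂₃ (v, w) (v', w')) / α₂ v v' := by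
        apply Finset.sum_congr rfl; intro v _
        apply Finset.sum_congr rfl; intro v' _
        exact sum_sum_mul_div _ _ _
    _ = ∑ v, ∑ v', α₂ v v' * (marginal γ₁₂ (u, v) * marginal γ₂₃ (v, w) /
          (marginal α₂ v * marginal α₂ v)) := by
        apply Finset.sum_congr rfl; intro v _
        apply Finset.sum_congr rfl; intro v' _
        exact glue_key2 h12 h23 u w v v'
    _ = ∑ v, marginal γ₁₂ (u, v) * marginal γ₂₃ (v, w) / marginal α₂ v := by
        apply Finset.sum_congr rfl; intro v _
        rw [← Finset.sum_mul]
        show marginal α₂ v * _ = _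
        by_cases hq : marginal α₂ v = 0
        · rw [hq, j_r_eq_zero_of_q h12 hq u]
          simp
        · field_simp

end Glue

section Glue2

variable {U : Type*} [Fintype U]
variable {α₁ α₂ α₃ : U → U → ℝ} {γ₁₂ γ₂₃ : U × U → U × U → ℝ}

lemma glue_sum_w (h12 : IsWeightJoining α₁ α₂ γ₁₂) (h23 : IsWeightJoining α₂ α₃ γ₂₃)
    (u u' w : U) :
    ∑ w', glueJ α₂ γ₁₂ γ₂₃ (u, w) (u', w')
      = ∑ v, ∑ v', γ₁₂ (u, v) (u', v') * (marginal γ₂₃ (v, w) / marginal α₂ v) := by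
  have : ∑ w', glueJ α₂ γ₁₂ γ₂₃ (u, w) (u', w')
      = ∑ v, ∑ v', ∑ w', γ₁₂ (u, v) (u', v') * γ₂₃ (v, w) (v', w') / α₂ v v' :=
    sum3_rot fun w' v v' => γ₁₂ (u, v) (u', v') * γ₂₃ (v, w) (v', w') / α₂ v v'
  rw [this]
  apply Finset.sum_congr rfl; intro v _
  apply Finset.sum_congr rfl; intro v' _
  rw [sum_mul_div' (fun w' => γ₂₃ (v, w) (v', w')) _ _]
  by_cases ha : α₂ v v' = 0
  · rw [j_γ_eq_zero_of_β h12 ha u u']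
    simp
  · by_cases hq : marginal α₂ v = 0
    · rw [glue_f1 h12 hq u (u', v')]
      simp
    · have e2 : ∑ w', γ₂₃ (v, w) (v', w')
          = α₂ v v' * marginal γ₂₃ (v, w) / marginal α₂ v := by
        rw [← h23.2.2.2.1 v v' w]
        field_simp
      rw [e2]
      field_simp

lemma glue_sum_u (h12 : IsWeightJoining α₁ α₂ γ₁₂) (h23 : IsWeightJoining α₂ α₃ γ₂₃)
    (u w w' : U) :
    ∑ u', glueJ α₂ γ₁₂ γ₂₃ (u, w) (u', w')
      = ∑ v, ∑ v', (marginal γ₁₂ (u, v) / marginal α₂ v) * γ₂₃ (v, w) (v', w') := by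
  have : ∑ u', glueJ α₂ γ₁₂ γ₂₃ (u, w) (u', w')
      = ∑ v, ∑ v', ∑ u', γ₁₂ (u, v) (u', v') * γ₂₃ (v, w) (v', w') / α₂ v v' :=
    sum3_rot fun u' v v' => γ₁₂ (u, v) (u', v') * γ₂₃ (v, w) (v', w') / α₂ v v'
  rw [this]
  apply Finset.sum_congr rfl; intro v _
  apply Finset.sum_congr rfl; intro v' _
  rw [sum_div_mul' (fun u' => γ₁₂ (u, v) (u', v')) _ _]
  by_cases ha : α₂ v v' = 0
  · rw [j_γ_eq_zero_of_α h23 ha w w']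
    simp
  · by_cases hq : marginal α₂ v = 0
    · rw [glue_f2 h23 hq w (v', w')]
      simp
    · have e1 : ∑ u', γ₁₂ (u, v) (u', v')
          = α₂ v v' * marginal γ₁₂ (u, v) / marginal α₂ v := by
        rw [← h12.2.2.2.2 v v' u]
        field_simp
      rw [e1]
      field_simp

lemma glueJ_isJoining (hα₂ : IsWeightFunction α₂)
    (h12 : IsWeightJoining α₁ α₂ γ₁₂) (h23 : IsWeightJoining α₂ α₃ γ₂₃) :
    IsWeightJoining α₁ α₃ (glueJ α₂ γ₁₂ γ₂₃) := by
  have hmg := marginal_glueJ h12 h23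
  refine ⟨⟨?_, ?_, ?_⟩, ?_, ?_, ?_, ?_⟩
  · intro x y
    apply Finset.sum_nonneg; intro v _
    apply Finset.sum_nonneg; intro v' _
    exact div_nonneg (mul_nonneg (j_γ_nonneg h12 _ _) (j_γ_nonneg h23 _ _)) (hα₂.1 v v')
  · intro x y
    show (∑ v, ∑ v', _) = (∑ v, ∑ v', _)
    rw [Finset.sum_comm]
    apply Finset.sum_congr rfl; intro v _
    apply Finset.sum_congr rfl; intro v' _
    rw [h12.1.2.1 (x.1, v') (y.1, v), h23.1.2.1 (v', x.2) (v, y.2), hα₂.2.1 v' v]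
  · calc ∑ x : U × U, ∑ y, glueJ α₂ γ₁₂ γ₂₃ x y
        = ∑ u, ∑ w, marginal (glueJ α₂ γ₁₂ γ₂₃) (u, w) := by
          rw [Fintype.sum_prod_type]; rfl
      _ = ∑ u, ∑ w, ∑ v, marginal γ₁₂ (u, v) * marginal γ₂₃ (v, w) / marginal α₂ v := by
          apply Finset.sum_congr rfl; intro u _
          apply Finset.sum_congr rfl; intro w _
          exact hmg u w
      _ = ∑ v, ∑ u, ∑ w, marginal γ₁₂ (u, v) * marginal γ₂₃ (v, w) / marginal α₂ v :=
          sum3_swap _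
      _ = ∑ v, marginal α₂ v := by
          apply Finset.sum_congr rfl; intro v _
          rw [sum_sum_mul_div (fun u => marginal γ₁₂ (u, v)) (fun w => marginal γ₂₃ (v, w)) _,
            h12.2.2.1 v, h23.2.1 v]
          by_cases hq : marginal α₂ v = 0
          · rw [hq]; simp
          · field_simp
      _ = 1 := sum_marginal_wf hα₂
  · intro u
    calc ∑ w, marginal (glueJ α₂ γ₁₂ γ₂₃) (u, w)
        = ∑ w, ∑ v, marginal γ₁₂ (u, v) * marginal γ₂₃ (v, w) / marginal α₂ v :=
          Finset.sum_congr rfl fun w _ => hmg u w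
      _ = ∑ v, ∑ w, marginal γ₁₂ (u, v) * marginal γ₂₃ (v, w) / marginal α₂ v :=
          Finset.sum_comm
      _ = ∑ v, marginal γ₁₂ (u, v) := by
          apply Finset.sum_congr rfl; intro v _
          rw [sum_mul_div' (fun w => marginal γ₂₃ (v, w)) _ _, h23.2.1 v]
          by_cases hq : marginal α₂ v = 0
          · rw [j_r_eq_zero_of_q h12 hq u]; simp
          · field_simp
      _ = marginal α₁ u := h12.2.1 u
  · intro w
    calc ∑ u, marginal (glueJ α₂ γ₁₂ γ₂₃) (u, w)
        = ∑ u, ∑ v, marginal γ₁₂ (u, v) * marginal γ₂₃ (v, w) / marginal α₂ v :=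
          Finset.sum_congr rfl fun u _ => hmg u w
      _ = ∑ v, ∑ u, marginal γ₁₂ (u, v) * marginal γ₂₃ (v, w) / marginal α₂ v :=
          Finset.sum_comm
      _ = ∑ v, marginal γ₂₃ (v, w) := by
          apply Finset.sum_congr rfl; intro v _
          rw [sum_div_mul' (fun u => marginal γ₁₂ (u, v)) _ _, h12.2.2.1 v]
          by_cases hq : marginal α₂ v = 0
          · rw [j_r_eq_zero_of_p h23 hq w]; simp
          · field_simp
      _ = marginal α₃ w := h23.2.2.1 w
  · intro u u' w
    rw [glue_sum_w h12 h23 u u' w, hmg u w, Finset.mul_sum, Finset.mul_sum]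
    apply Finset.sum_congr rfl; intro v _
    rw [← Finset.sum_mul, ← mul_assoc, h12.2.2.2.1 u u' v]
    ring
  · intro w w' u
    rw [glue_sum_u h12 h23 u w w', hmg u w, Finset.mul_sum, Finset.mul_sum]
    apply Finset.sum_congr rfl; intro v _
    rw [← Finset.mul_sum, mul_left_comm, h23.2.2.2.2 w w' v]
    ring

lemma glue_cost (c : U → U → ℝ) {κ : ℝ} (hκ : 1 ≤ κ)
    (hcnn : ∀ u v, 0 ≤ c u v)
    (hct : ∀ u u' u'' : U, c u u'' ≤ c u u' + c u' u'')
    (hα₂ : IsWeightFunction α₂)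
    (h12 : IsWeightJoining α₁ α₂ γ₁₂) (h23 : IsWeightJoining α₂ α₃ γ₂₃) :
    (∑ p : U × U, c p.1 p.2 ^ κ * marginal (glueJ α₂ γ₁₂ γ₂₃) p) ^ (1/κ)
      ≤ (∑ p : U × U, c p.1 p.2 ^ κ * marginal γ₁₂ p) ^ (1/κ)
        + (∑ p : U × U, c p.1 p.2 ^ κ * marginal γ₂₃ p) ^ (1/κ) := by
  have hκ0 : 0 < κ := lt_of_lt_of_le one_pos hκ
  set ρ : U × U × U → ℝ := fun x =>
    marginal γ₁₂ (x.1, x.2.1) * marginal γ₂₃ (x.2.1, x.2.2) / marginal α₂ x.2.1 with hρdef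
  have hρ : ∀ x, 0 ≤ ρ x := fun x =>
    div_nonneg (mul_nonneg (j_r_nonneg h12 _) (j_r_nonneg h23 _)) (marginal_nonneg_s8 hα₂.1 _)
  have hmg := marginal_glueJ h12 h23
  -- Step 1 : rewrite the glued cost as a sum over triples
  have step1 : ∑ p : U × U, c p.1 p.2 ^ κ * marginal (glueJ α₂ γ₁₂ γ₂₃) p
      = ∑ x : U × U × U, c x.1 x.2.2 ^ κ * ρ x := by
    simp only [Fintype.sum_prod_type]
    have : ∀ u, ∑ w, c u w ^ κ * marginal (glueJ α₂ γ₁₂ γ₂₃) (u, w)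
        = ∑ w, ∑ v, c u w ^ κ * ρ (u, v, w) := by
      intro u
      apply Finset.sum_congr rfl; intro w _
      rw [hmg u w, Finset.mul_sum]
    calc ∑ u, ∑ w, c u w ^ κ * marginal (glueJ α₂ γ₁₂ γ₂₃) (u, w)
        = ∑ u, ∑ w, ∑ v, c u w ^ κ * ρ (u, v, w) := Finset.sum_congr rfl fun u _ => this u
      _ = ∑ u, ∑ v, ∑ w, c u w ^ κ * ρ (u, v, w) :=
          Finset.sum_congr rfl fun u _ => Finset.sum_comm
      _ = ∑ u, ∑ v, ∑ w, c u w ^ κ * ρ (u, v, w) := rfl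
  -- Step 4 : first marginal cost
  have step4 : ∑ x : U × U × U, c x.1 x.2.1 ^ κ * ρ x
      = ∑ p : U × U, c p.1 p.2 ^ κ * marginal γ₁₂ p := by
    simp only [Fintype.sum_prod_type]
    apply Finset.sum_congr rfl; intro u _
    apply Finset.sum_congr rfl; intro v _
    show ∑ w, c u v ^ κ * (marginal γ₁₂ (u, v) * marginal γ₂₃ (v, w) / marginal α₂ v) = _
    rw [← Finset.mul_sum, sum_mul_div' (fun w => marginal γ₂₃ (v, w)) _ _, h23.2.1 v]
    by_cases hq : marginal α₂ v = 0
    · rw [j_r_eq_zero_of_q h12 hq u]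
      simp
    · field_simp
  -- Step 5 : second marginal cost
  have step5 : ∑ x : U × U × U, c x.2.1 x.2.2 ^ κ * ρ x
      = ∑ p : U × U, c p.1 p.2 ^ κ * marginal γ₂₃ p := by
    simp only [Fintype.sum_prod_type]
    have swap : ∑ u, ∑ v, ∑ w, c v w ^ κ * ρ (u, v, w)
        = ∑ v, ∑ w, ∑ u, c v w ^ κ * ρ (u, v, w) :=
      sum3_rot fun u v w => c v w ^ κ * ρ (u, v, w)
    rw [swap]
    apply Finset.sum_congr rfl; intro v _
    apply Finset.sum_congr rfl; intro w _
    show ∑ u, c v w ^ κ * (marginal γ₁₂ (u, v) * marginal γ₂₃ (v, w) / marginal α₂ v) = _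
    rw [← Finset.mul_sum, sum_div_mul' (fun u => marginal γ₁₂ (u, v)) _ _, h12.2.2.1 v]
    by_cases hq : marginal α₂ v = 0
    · rw [j_r_eq_zero_of_p h23 hq w]
      simp
    · field_simp
  -- Step 2 : triangle inequality inside the sum
  have step2 : ∑ x : U × U × U, c x.1 x.2.2 ^ κ * ρ x
      ≤ ∑ x : U × U × U, (c x.1 x.2.1 + c x.2.1 x.2.2) ^ κ * ρ x := by
    apply Finset.sum_le_sum; intro x _
    exact mul_le_mul_of_nonneg_right
      (Real.rpow_le_rpow (hcnn _ _) (hct x.1 x.2.1 x.2.2) (le_of_lt hκ0)) (hρ x)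
  -- Step 3 : Minkowski
  have step3 := weighted_minkowski hκ (fun x : U × U × U => c x.1 x.2.1)
    (fun x => c x.2.1 x.2.2) ρ (fun x => hcnn _ _) (fun x => hcnn _ _) hρ
  rw [step4, step5] at step3
  rw [step1]
  refine le_trans (Real.rpow_le_rpow ?_ step2 (by positivity)) step3
  apply Finset.sum_nonneg; intro x _
  exact mul_nonneg (Real.rpow_nonneg (hcnn _ _) _) (hρ x)

end Glue2

section ZeroDist

variable {U : Type*} [Fintype U]

/-- Pure real arithmetic for the zero-distance argument. -/
lemma zero_arith (P Q R A B D E₁ E₂ s : ℝ)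
    (f1 : P * (D + E₁) = A * R) (f2 : Q * (D + E₂) = B * R)
    (hE₁0 : 0 ≤ E₁) (hE₁s : E₁ ≤ s) (hE₂0 : 0 ≤ E₂) (hE₂s : E₂ ≤ s)
    (hRP : R ≤ P) (hPRs : P ≤ R + s) (hRQ : R ≤ Q) (hQRs : Q ≤ R + s)
    (hR0 : 0 ≤ R) (hA0 : 0 ≤ A) (hAP : A ≤ P) (hB0 : 0 ≤ B) (hBQ : B ≤ Q)
    (hP1 : P ≤ 1) (hQ1 : Q ≤ 1) (hs0 : 0 ≤ s) (hBA : B ≤ A) :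
    (A - B) ^ 3 ≤ 12 * s := by
  have hδ0 : 0 ≤ A - B := by linarith
  have hδ1 : A - B ≤ 1 := by linarith
  have hQ0 : 0 ≤ Q := le_trans hR0 hRQ
  have hP0 : 0 ≤ P := le_trans hR0 hRP
  have h1 : R * (Q * A - P * B) = P * Q * (E₁ - E₂) := by
    linear_combination P * f2 - Q * f1
  have e : R * Q * (A - B) = P * Q * (E₁ - E₂) + R * B * (P - Q) := by
    linear_combination h1
  have hR1 : R ≤ 1 := hRP.trans hP1
  have hB1 : B ≤ 1 := hBQ.trans hQ1
  have hb1 : P * Q * (E₁ - E₂) ≤ s :=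
    calc P * Q * (E₁ - E₂) ≤ P * Q * s :=
          mul_le_mul_of_nonneg_left (by linarith) (mul_nonneg hP0 hQ0)
      _ ≤ 1 * s := mul_le_mul_of_nonneg_right (mul_le_one₀ hP1 hQ0 hQ1) hs0
      _ = s := one_mul s
  have hb2 : R * B * (P - Q) ≤ s :=
    calc R * B * (P - Q) ≤ R * B * s :=
          mul_le_mul_of_nonneg_left (by linarith) (mul_nonneg hR0 hB0)
      _ ≤ 1 * s := mul_le_mul_of_nonneg_right (mul_le_one₀ hR1 hB0 hB1) hs0
      _ = s := one_mul s
  have h2 : R * Q * (A - B) ≤ 2 * s := by linarith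
  have hQδ : A - B ≤ Q + s := by linarith
  rcases le_or_gt (A - B) (2 * s) with h | h
  · have hsq : (A - B) ^ 2 ≤ 1 := by nlinarith
    have h30 : (A - B) ^ 3 ≤ A - B := by nlinarith [mul_le_mul_of_nonneg_left hsq hδ0]
    linarith
  · have hQhalf : (A - B) / 2 ≤ Q := by linarith
    have hQδ0 : 0 ≤ Q * (A - B) := mul_nonneg hQ0 hδ0
    have hQδ1 : Q * (A - B) ≤ 1 := mul_le_one₀ hQ1 hδ0 hδ1
    have hstep : (Q - R) * (Q * (A - B)) ≤ s * 1 :=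
      mul_le_mul (by linarith) hQδ1 hQδ0 hs0
    have hid : Q * Q * (A - B) = R * Q * (A - B) + (Q - R) * (Q * (A - B)) := by ring
    have h3 : Q * Q * (A - B) ≤ 3 * s := by linarith
    have hq2 : (A - B) / 2 * ((A - B) / 2) ≤ Q * Q := mul_self_le_mul_self (by linarith) hQhalf
    have hq3 := mul_le_mul_of_nonneg_right hq2 hδ0
    have hid2 : (A - B) / 2 * ((A - B) / 2) * (A - B) = (A - B) ^ 3 / 4 := by ring
    linarith

lemma sum_marginal_offdiag_le [DecidableEq U] {g : U × U → U × U → ℝ}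
    (hg : ∀ x y, 0 ≤ g x y) (t : Finset U) (f : U → U × U)
    (hinj : Set.InjOn f t) (hoff : ∀ x ∈ t, (f x).1 ≠ (f x).2) :
    ∑ x ∈ t, marginal g (f x) ≤ ∑ p ∈ Finset.univ.offDiag, marginal g p := by
  rw [← Finset.sum_image (fun x hx y hy h => hinj hx hy h)]
  apply Finset.sum_le_sum_of_subset_of_nonneg
  · intro p hp
    obtain ⟨x, hx, rfl⟩ := Finset.mem_image.mp hp
    exact Finset.mem_offDiag.mpr ⟨Finset.mem_univ _, Finset.mem_univ _, hoff x hx⟩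
  · intro p _ _
    exact marginal_nonneg_s8 hg p

/-- The central estimate: the cube of a pointwise difference of the weight functions is
controlled by the off-diagonal mass of any joining. -/
lemma abs_diff_cube_le [DecidableEq U] {α β : U → U → ℝ} {γ : U × U → U × U → ℝ}
    (hα : IsWeightFunction α) (hβ : IsWeightFunction β)
    (hγ : IsWeightJoining α β γ) (a b : U) :
    |α a b - β a b| ^ 3 ≤ 12 * ∑ p ∈ Finset.univ.offDiag, marginal γ p := by
  set s := ∑ p ∈ Finset.univ.offDiag, marginal γ p with hsdef
  have hs0 : 0 ≤ s := Finset.sum_nonneg fun p _ => j_r_nonneg hγ p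
  set P := marginal α a
  set Q := marginal β a
  set R := marginal γ (a, a)
  set D := γ (a, a) (b, b)
  set E₁ := ∑ v' ∈ Finset.univ.erase b, γ (a, a) (b, v') with hE₁def
  set E₂ := ∑ u' ∈ Finset.univ.erase b, γ (a, a) (u', b) with hE₂def
  have hsplit1 : ∑ v', γ (a, a) (b, v') = D + E₁ :=
    (Finset.add_sum_erase Finset.univ (fun v' => γ (a, a) (b, v')) (Finset.mem_univ b)).symm
  have hsplit2 : ∑ u', γ (a, a) (u', b) = D + E₂ :=
    (Finset.add_sum_erase Finset.univ (fun u' => γ (a, a) (u', b)) (Finset.mem_univ b)).symm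
  have f1 : P * (D + E₁) = α a b * R := by
    have := hγ.2.2.2.1 a b a
    rwa [hsplit1] at this
  have f2 : Q * (D + E₂) = β a b * R := by
    have := hγ.2.2.2.2 a b a
    rwa [hsplit2] at this
  have hE₁0 : 0 ≤ E₁ := Finset.sum_nonneg fun _ _ => j_γ_nonneg hγ _ _
  have hE₂0 : 0 ≤ E₂ := Finset.sum_nonneg fun _ _ => j_γ_nonneg hγ _ _
  have hE₁s : E₁ ≤ s := by
    refine le_trans (Finset.sum_le_sum fun v' _ => j_γ_le_r' hγ (a, a) (b, v')) ?_
    exact sum_marginal_offdiag_le hγ.1.1 (Finset.univ.erase b) (fun v' => (b, v'))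
      (fun x _ y _ h => (Prod.mk.injEq _ _ _ _).mp h |>.2)
      (fun x hx => fun h => (Finset.mem_erase.mp hx).1 h.symm)
  have hE₂s : E₂ ≤ s := by
    refine le_trans (Finset.sum_le_sum fun u' _ => j_γ_le_r' hγ (a, a) (u', b)) ?_
    exact sum_marginal_offdiag_le hγ.1.1 (Finset.univ.erase b) (fun u' => (u', b))
      (fun x _ y _ h => (Prod.mk.injEq _ _ _ _).mp h |>.1)
      (fun x hx => (Finset.mem_erase.mp hx).1)
  have hPsplit : P = R + ∑ v ∈ Finset.univ.erase a, marginal γ (a, v) := by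
    show marginal α a = marginal γ (a, a) + _
    rw [← hγ.2.1 a]
    exact (Finset.add_sum_erase Finset.univ (fun v => marginal γ (a, v)) (Finset.mem_univ a)).symm
  have hQsplit : Q = R + ∑ u ∈ Finset.univ.erase a, marginal γ (u, a) := by
    show marginal β a = marginal γ (a, a) + _
    rw [← hγ.2.2.1 a]
    exact (Finset.add_sum_erase Finset.univ (fun u => marginal γ (u, a)) (Finset.mem_univ a)).symm
  have hRP : R ≤ P := by
    rw [hPsplit]
    have : 0 ≤ ∑ v ∈ Finset.univ.erase a, marginal γ (a, v) :=
      Finset.sum_nonneg fun _ _ => j_r_nonneg hγ _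
    linarith
  have hPRs : P ≤ R + s := by
    rw [hPsplit]
    have := sum_marginal_offdiag_le hγ.1.1 (Finset.univ.erase a) (fun v => (a, v))
      (fun x _ y _ h => (Prod.mk.injEq _ _ _ _).mp h |>.2)
      (fun x hx => fun h => (Finset.mem_erase.mp hx).1 h.symm)
    linarith
  have hRQ : R ≤ Q := by
    rw [hQsplit]
    have : 0 ≤ ∑ u ∈ Finset.univ.erase a, marginal γ (u, a) :=
      Finset.sum_nonneg fun _ _ => j_r_nonneg hγ _
    linarith
  have hQRs : Q ≤ R + s := by
    rw [hQsplit]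
    have := sum_marginal_offdiag_le hγ.1.1 (Finset.univ.erase a) (fun u => (u, a))
      (fun x _ y _ h => (Prod.mk.injEq _ _ _ _).mp h |>.1)
      (fun x hx => (Finset.mem_erase.mp hx).1)
    linarith
  rcases le_total (β a b) (α a b) with hba | hba
  · rw [abs_of_nonneg (by linarith)]
    exact zero_arith P Q R (α a b) (β a b) D E₁ E₂ s f1 f2 hE₁0 hE₁s hE₂0 hE₂s
      hRP hPRs hRQ hQRs (j_r_nonneg hγ _) (hα.1 a b) (le_marginal_s8 hα.1 a b)
      (hβ.1 a b) (le_marginal_s8 hβ.1 a b) (marginal_le_one hα a) (marginal_le_one hβ a) hs0 hba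
  · rw [abs_sub_comm, abs_of_nonneg (by linarith)]
    exact zero_arith Q P R (β a b) (α a b) D E₂ E₁ s f2 f1 hE₂0 hE₂s hE₁0 hE₁s
      hRQ hQRs hRP hPRs (j_r_nonneg hγ _) (hβ.1 a b) (le_marginal_s8 hβ.1 a b)
      (hα.1 a b) (le_marginal_s8 hα.1 a b) (marginal_le_one hβ a) (marginal_le_one hα a) hs0 hba

end ZeroDist

/-- The `κ`-OGJ distance between two weighted graphs on a common vertex set `U`,
defined as the minimum (here: infimum, which is attained) over weight joinings
`γ ∈ J(α,β)` of `(∑_{(u,u')} c(u,u')^κ · r_γ(u,u'))^{1/κ}`. -/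
noncomputable def ogjDistK {U : Type*} [Fintype U] (c : U → U → ℝ) (κ : ℝ)
    (α β : U → U → ℝ) : ℝ :=
  sInf {x : ℝ | ∃ γ ∈ weightJoinings α β,
    x = (∑ p : U × U, c p.1 p.2 ^ κ * marginal γ p) ^ (1 / κ)}

/-- If `c` is a metric on the finite set `U` and `κ ≥ 1`, then the
`κ`-OGJ distance is a metric on the family of weighted graphs on `U`: nonnegative,
symmetric, zero exactly on identical weight functions, and satisfying the triangle
inequality. -/
theorem ogjDistK_is_metric
    {U : Type*} [Fintype U] (c : U → U → ℝ) (κ : ℝ) (hκ : 1 ≤ κ)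
    (hc_eq : ∀ u u' : U, c u u' = 0 ↔ u = u')
    (hc_symm : ∀ u u' : U, c u u' = c u' u)
    (hc_triangle : ∀ u u' u'' : U, c u u'' ≤ c u u' + c u' u'')
    (α₁ α₂ α₃ : U → U → ℝ)
    (hα₁ : IsWeightFunction α₁) (hα₂ : IsWeightFunction α₂)
    (hα₃ : IsWeightFunction α₃) :
    0 ≤ ogjDistK c κ α₁ α₂ ∧
    ogjDistK c κ α₁ α₂ = ogjDistK c κ α₂ α₁ ∧
    (ogjDistK c κ α₁ α₂ = 0 ↔ α₁ = α₂) ∧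
    ogjDistK c κ α₁ α₃ ≤ ogjDistK c κ α₁ α₂ + ogjDistK c κ α₂ α₃ := by
  classical
  have hκ0 : 0 < κ := lt_of_lt_of_le one_pos hκ
  have hκne : κ ≠ 0 := ne_of_gt hκ0
  have hcnn : ∀ u v, 0 ≤ c u v := by
    intro u v
    have h1 := hc_triangle u v u
    have h2 := (hc_eq u u).mpr rfl
    have h3 := hc_symm v u
    linarith
  set S : (U → U → ℝ) → (U → U → ℝ) → Set ℝ := fun α β =>
    {x : ℝ | ∃ γ ∈ weightJoinings α β,
      x = (∑ p : U × U, c p.1 p.2 ^ κ * marginal γ p) ^ (1 / κ)} with hSdef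
  have hS : ∀ α β : U → U → ℝ, ogjDistK c κ α β = sInf (S α β) := fun _ _ => rfl
  have hrpowinv : ∀ t : ℝ, 0 ≤ t → (t ^ (1/κ)) ^ κ = t := by
    intro t ht
    rw [← Real.rpow_mul ht, one_div_mul_cancel hκne, Real.rpow_one]
  have hne : ∀ α β : U → U → ℝ, IsWeightFunction α → IsWeightFunction β →
      (S α β).Nonempty := by
    intro α β hα hβ
    exact ⟨_, ⟨indepJ α β, indepJ_isJoining hα hβ, rfl⟩⟩
  have hlb : ∀ α β : U → U → ℝ, ∀ x ∈ S α β, (0:ℝ) ≤ x := by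
    rintro α β x ⟨γ, hγ, rfl⟩
    apply Real.rpow_nonneg
    apply Finset.sum_nonneg
    intro p _
    exact mul_nonneg (Real.rpow_nonneg (hcnn _ _) κ)
      (marginal_nonneg_s8 (hγ : IsWeightJoining α β γ).1.1 p)
  have hbdd : ∀ α β : U → U → ℝ, BddBelow (S α β) := fun α β =>
    ⟨0, fun x hx => hlb α β x hx⟩
  have hcost0 : ∀ (γ : U × U → U × U → ℝ), (∀ x y, 0 ≤ γ x y) →
      0 ≤ ∑ p : U × U, c p.1 p.2 ^ κ * marginal γ p := by
    intro γ hγ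
    apply Finset.sum_nonneg
    intro p _
    exact mul_nonneg (Real.rpow_nonneg (hcnn _ _) κ) (marginal_nonneg_s8 hγ p)
  -- nonnegativity
  have n1 : 0 ≤ ogjDistK c κ α₁ α₂ := by
    rw [hS]
    exact le_csInf (hne α₁ α₂ hα₁ hα₂) (hlb α₁ α₂)
  refine ⟨n1, ?_, ⟨?_, ?_⟩, ?_⟩
  -- symmetry
  · have hsub : ∀ α β : U → U → ℝ, S α β ⊆ S β α := by
      rintro α β x ⟨γ, hγ, rfl⟩
      refine ⟨swapJ γ, swapJ_isJoining hγ, ?_⟩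
      congr 1
      apply Fintype.sum_equiv (Equiv.prodComm U U)
      intro p
      rw [marginal_swapJ, hc_symm p.1 p.2]
      rfl
    rw [hS, hS]
    exact le_antisymm
      (csInf_le_csInf (hbdd α₁ α₂) (hne α₂ α₁ hα₂ hα₁) (hsub α₂ α₁))
      (csInf_le_csInf (hbdd α₂ α₁) (hne α₁ α₂ hα₁ hα₂) (hsub α₁ α₂))
  -- zero implies equal
  · intro h0
    by_contra hne'
    obtain ⟨a, ha⟩ := Function.ne_iff.mp hne'
    obtain ⟨b, hb⟩ := Function.ne_iff.mp ha
    have hδ : 0 < |α₁ a b - α₂ a b| := abs_pos.mpr (sub_ne_zero.mpr hb)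
    have hδ3 : 0 < |α₁ a b - α₂ a b| ^ 3 := pow_pos hδ 3
    by_cases hod : (Finset.univ.offDiag : Finset (U × U)).Nonempty
    · set m := Finset.inf' _ hod (fun p : U × U => c p.1 p.2 ^ κ) with hmdef
      have hm : 0 < m := by
        rw [hmdef, Finset.lt_inf'_iff]
        intro p hp
        have hps := (Finset.mem_offDiag.mp hp).2.2
        have : c p.1 p.2 ≠ 0 := fun h => hps ((hc_eq _ _).mp h)
        exact Real.rpow_pos_of_pos (lt_of_le_of_ne (hcnn _ _) (Ne.symm this)) κ
      set δ3 := |α₁ a b - α₂ a b| ^ 3 with hδ3def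
      have hε : (0:ℝ) < (m * (δ3 / 24)) ^ (1/κ) :=
        Real.rpow_pos_of_pos (mul_pos hm (by positivity)) _
      have hlt : sInf (S α₁ α₂) < (m * (δ3 / 24)) ^ (1/κ) := by
        rw [← hS, h0]; exact hε
      obtain ⟨x, hx, hxlt⟩ := exists_lt_of_csInf_lt (hne α₁ α₂ hα₁ hα₂) hlt
      obtain ⟨γ, hγ, rfl⟩ := hx
      have hγ' : IsWeightJoining α₁ α₂ γ := hγ
      have hc0 := hcost0 γ hγ'.1.1
      have hcostlt : ∑ p : U × U, c p.1 p.2 ^ κ * marginal γ p < m * (δ3 / 24) := by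
        have h := Real.rpow_lt_rpow (Real.rpow_nonneg hc0 _) hxlt hκ0
        rwa [hrpowinv _ hc0, hrpowinv _ (le_of_lt (mul_pos hm (by positivity)))] at h
      set s := ∑ p ∈ Finset.univ.offDiag, marginal γ p with hsdef
      have hms : m * s ≤ ∑ p : U × U, c p.1 p.2 ^ κ * marginal γ p := by
        calc m * s = ∑ p ∈ Finset.univ.offDiag, m * marginal γ p := Finset.mul_sum _ _ _
          _ ≤ ∑ p ∈ Finset.univ.offDiag, c p.1 p.2 ^ κ * marginal γ p := by
              apply Finset.sum_le_sum
              intro p hp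
              exact mul_le_mul_of_nonneg_right (Finset.inf'_le _ hp) (j_r_nonneg hγ' p)
          _ ≤ ∑ p : U × U, c p.1 p.2 ^ κ * marginal γ p := by
              apply Finset.sum_le_sum_of_subset_of_nonneg (Finset.subset_univ _)
              intro p _ _
              exact mul_nonneg (Real.rpow_nonneg (hcnn _ _) κ) (j_r_nonneg hγ' p)
      have hslt : s < δ3 / 24 := by
        have := lt_of_le_of_lt hms hcostlt
        exact lt_of_mul_lt_mul_left this (le_of_lt hm) |>.trans_le (le_refl _) |>.trans_le (le_refl _)
      have hkey := abs_diff_cube_le hα₁ hα₂ hγ' a b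
      rw [← hsdef, ← hδ3def] at hkey
      linarith
    · obtain ⟨x, hx⟩ := hne α₁ α₂ hα₁ hα₂
      obtain ⟨γ, hγ, rfl⟩ := hx
      have hγ' : IsWeightJoining α₁ α₂ γ := hγ
      have hkey := abs_diff_cube_le hα₁ hα₂ hγ' a b
      rw [Finset.not_nonempty_iff_eq_empty.mp hod, Finset.sum_empty] at hkey
      simp at hkey
      linarith
  -- equal implies zero
  · intro h
    subst h
    rw [hS]
    refine le_antisymm ?_ (by rw [← hS]; exact n1)
    have hzero : (∑ p : U × U, c p.1 p.2 ^ κ * marginal (diagJ α₁) p) = 0 := by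
      rw [Fintype.sum_prod_type]
      apply Finset.sum_eq_zero; intro u _
      apply Finset.sum_eq_zero; intro v _
      by_cases h : u = v
      · subst h
        rw [(hc_eq u u).mpr rfl, Real.zero_rpow hκne, zero_mul]
      · rw [marginal_diagJ]
        simp [h]
    have : (0:ℝ) ∈ S α₁ α₁ := by
      refine ⟨diagJ α₁, diagJ_isJoining hα₁, ?_⟩
      rw [hzero, Real.zero_rpow (one_div_ne_zero hκne)]
    exact csInf_le (hbdd α₁ α₁) this
  -- triangle inequality
  · rw [hS, hS, hS]
    refine le_of_forall_pos_le_add ?_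
    intro ε hε
    obtain ⟨x, hx, hxlt⟩ := exists_lt_of_csInf_lt (hne α₁ α₂ hα₁ hα₂)
      (lt_add_of_pos_right _ (half_pos hε))
    obtain ⟨y, hy, hylt⟩ := exists_lt_of_csInf_lt (hne α₂ α₃ hα₂ hα₃)
      (lt_add_of_pos_right _ (half_pos hε))
    obtain ⟨γ12, hγ12, rfl⟩ := hx
    obtain ⟨γ23, hγ23, rfl⟩ := hy
    have hγ12' : IsWeightJoining α₁ α₂ γ12 := hγ12
    have hγ23' : IsWeightJoining α₂ α₃ γ23 := hγ23
    have hg := glueJ_isJoining hα₂ hγ12' hγ23'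
    have hmem : ((∑ p : U × U, c p.1 p.2 ^ κ * marginal (glueJ α₂ γ12 γ23) p) ^ (1/κ))
        ∈ S α₁ α₃ := ⟨_, hg, rfl⟩
    calc sInf (S α₁ α₃)
        ≤ (∑ p : U × U, c p.1 p.2 ^ κ * marginal (glueJ α₂ γ12 γ23) p) ^ (1/κ) :=
          csInf_le (hbdd α₁ α₃) hmem
      _ ≤ (∑ p : U × U, c p.1 p.2 ^ κ * marginal γ12 p) ^ (1/κ)
            + (∑ p : U × U, c p.1 p.2 ^ κ * marginal γ23 p) ^ (1/κ) :=
          glue_cost c hκ hcnn hc_triangle hα₂ hγ12' hγ23'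
      _ ≤ sInf (S α₁ α₂) + sInf (S α₂ α₃) + ε := by linarith
end

section
/- Let G = (U,α,φ_G) and H = (V,β,φ_H) be two fully supported weighted labeled graphs, and let c_Φ(u,v) = 1 if φ_G(u) ≠ φ_H(v) and 0 otherwise. If ρ_{c_Φ}(G,H) = 0 and γ is an optimal weight joining (γ ∈ J(α,β) with ⟨c_Φ, r_γ⟩ = 0) that is bijective, then the induced map f_γ : U → V is a graph isomorphism from G to H. -/
open Finset

def IsBijectiveJoining {U V : Type*} [Fintype U] [Fintype V]
    (γ : U × V → U × V → ℝ) : Prop :=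
  (∀ u : U, ∃! v : V, 0 < marginal γ (u, v)) ∧ (∀ v : V, ∃! u : U, 0 < marginal γ (u, v))

open Classical in
noncomputable def labelCost {U V A : Type*} (ψG : U → A) (ψH : V → A) : U → V → ℝ :=
  fun u v => if ψG u = ψH v then 0 else 1

/-! Once `r_γ` is supported on the graph of `f`, the marginal couplings give
`p(u) = r_γ(u, f u) = q(f u)`, and both transition couplings collapse to a single term
`γ((u, f u), (u', f u'))`. Comparing them yields `α(u,u') r_γ(u, f u) = β(f u, f u') r_γ(u, f u)`,
and `r_γ(u, f u) > 0` can be cancelled. Labels agree because a zero cost with nonnegative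
terms vanishes termwise on the support of `r_γ`. -/

namespace IsWeightFunction

variable {U : Type*} [Fintype U] {α : U → U → ℝ}

theorem marginal_nonneg (hα : IsWeightFunction α) (u : U) : 0 ≤ marginal α u :=
  sum_nonneg fun u' _ => hα.1 u u'

theorem apply_eq_zero_of_marginal_eq_zero (hα : IsWeightFunction α) {u' : U}
    (h : marginal α u' = 0) (u : U) : α u u' = 0 := by
  rw [hα.2.1]
  refine le_antisymm ?_ (hα.1 u' u)
  exact h ▸ single_le_sum (fun u'' _ => hα.1 u' u'') (mem_univ u)

end IsWeightFunction

section Joining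

variable {U V : Type*} [Fintype U] [Fintype V] {α : U → U → ℝ} {β : V → V → ℝ}
  {γ : U × V → U × V → ℝ} {f : U → V}

namespace IsBijectiveJoining

theorem bijective (hbij : IsBijectiveJoining γ) (hf : ∀ u, 0 < marginal γ (u, f u)) :
    Function.Bijective f := by
  refine ⟨fun u u' h => (hbij.2 (f u)).unique (hf u) (h ▸ hf u'), fun v => ?_⟩
  obtain ⟨u, hu, -⟩ := hbij.2 v
  exact ⟨u, (hbij.1 u).unique (hf u) hu⟩

theorem marginal_eq_zero_of_ne (hbij : IsBijectiveJoining γ) (hγ : IsWeightFunction γ)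
    (hf : ∀ u, 0 < marginal γ (u, f u)) {u : U} {v : V} (hv : v ≠ f u) :
    marginal γ (u, v) = 0 := by
  by_contra h
  exact hv ((hbij.1 u).unique ((hγ.marginal_nonneg _).lt_of_ne' h) (hf u))

end IsBijectiveJoining

namespace IsWeightJoining

variable (hγ : IsWeightJoining α β γ) (hsupp : ∀ u v, v ≠ f u → marginal γ (u, v) = 0)
include hγ hsupp

theorem marginal_left_eq (u : U) : marginal α u = marginal γ (u, f u) := by
  rw [← hγ.2.1 u]
  exact sum_eq_single (f u) (fun v _ hv => hsupp u v hv) (absurd (mem_univ _))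

theorem marginal_right_eq (hinj : Function.Injective f) (u : U) :
    marginal β (f u) = marginal γ (u, f u) := by
  rw [← hγ.2.2.1 (f u)]
  exact sum_eq_single u (fun u' _ hu' => hsupp u' (f u) (hinj.ne hu').symm) (absurd (mem_univ _))

theorem apply_eq_zero_of_ne (p : U × V) {u' : U} {v' : V} (hv' : v' ≠ f u') :
    γ p (u', v') = 0 :=
  hγ.1.apply_eq_zero_of_marginal_eq_zero (hsupp u' v' hv') p

theorem weight_eq_of_marginal_pos (hinj : Function.Injective f) {u : U}
    (hpos : 0 < marginal γ (u, f u)) (u' : U) : α u u' = β (f u) (f u') := by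
  have hleft : ∑ v', γ (u, f u) (u', v') = γ (u, f u) (u', f u') :=
    sum_eq_single (f u') (fun _ _ hv' => hγ.apply_eq_zero_of_ne hsupp _ hv')
      (absurd (mem_univ _))
  have hright : ∑ u'', γ (u, f u) (u'', f u') = γ (u, f u) (u', f u') :=
    sum_eq_single u' (fun _ _ hu'' => hγ.apply_eq_zero_of_ne hsupp _ (hinj.ne hu'').symm)
      (absurd (mem_univ _))
  have hα := hγ.2.2.2.1 u u' (f u)
  have hβ := hγ.2.2.2.2 (f u) (f u') u
  rw [hleft, hγ.marginal_left_eq hsupp] at hα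
  rw [hright, hγ.marginal_right_eq hsupp hinj] at hβ
  exact mul_right_cancel₀ hpos.ne' (hα.symm.trans hβ)

end IsWeightJoining

theorem cost_eq_zero_of_ogjCost_eq_zero {c : U → V → ℝ} (hc : ∀ u v, 0 ≤ c u v)
    (hγ : IsWeightFunction γ) (hcost : ogjCost c γ = 0) {u : U} {v : V}
    (hpos : 0 < marginal γ (u, v)) : c u v = 0 := by
  have hterms := (sum_eq_zero_iff_of_nonneg fun p _ =>
    mul_nonneg (hc p.1 p.2) (hγ.marginal_nonneg p)).mp hcost (u, v) (mem_univ _)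
  exact (mul_eq_zero.mp hterms).resolve_right hpos.ne'

end Joining

theorem labelCost_nonneg {U V A : Type*} (ψG : U → A) (ψH : V → A) (u : U) (v : V) :
    0 ≤ labelCost ψG ψH u v := by
  unfold labelCost
  split <;> norm_num

theorem labelCost_eq_zero_iff {U V A : Type*} {ψG : U → A} {ψH : V → A} {u : U} {v : V} :
    labelCost ψG ψH u v = 0 ↔ ψG u = ψH v := by
  unfold labelCost
  split <;> simp_all

theorem bijective_optimal_joining_induces_isomorphism_general
    {U V L : Type*} [Fintype U] [Fintype V]
    (α : U → U → ℝ) (β : V → V → ℝ)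
    (φG : U → L) (φH : V → L)
    (γ : U × V → U × V → ℝ)
    (hγ : γ ∈ weightJoinings α β)
    (hcost : ogjCost (labelCost φG φH) γ = 0)
    (hbij : IsBijectiveJoining γ) :
    ∀ f : U → V, (∀ u : U, 0 < marginal γ (u, f u)) →
      Function.Bijective f ∧
      (∀ u u' : U, α u u' = β (f u) (f u')) ∧
      (∀ u : U, φG u = φH (f u)) := by
  intro f hf
  have hγ : IsWeightJoining α β γ := hγ
  have hf_bij := hbij.bijective hf
  have hsupp : ∀ u v, v ≠ f u → marginal γ (u, v) = 0 :=
    fun _ _ => hbij.marginal_eq_zero_of_ne hγ.1 hf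
  refine ⟨hf_bij, fun u => hγ.weight_eq_of_marginal_pos hsupp hf_bij.1 (hf u), fun u => ?_⟩
  exact labelCost_eq_zero_iff.mp
    (cost_eq_zero_of_ogjCost_eq_zero (labelCost_nonneg φG φH) hγ.1 hcost (hf u))

/-- Let `G` and `H` be fully supported labeled graphs with label cost
`c_Φ`.  If `ρ_{c_Φ}(G,H) = 0` and `γ` is an optimal weight joining (i.e.
`γ ∈ J(α,β)` with `⟨c_Φ, r_γ⟩ = 0`) which is bijective, then the induced map
`f_γ` (the map sending each `u` to the unique `v` with `r_γ(u,v) > 0`) is a graph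
isomorphism from `G` to `H`. -/
theorem bijective_optimal_joining_induces_isomorphism
    {U V L : Type*} [Fintype U] [Fintype V]
    (α : U → U → ℝ) (β : V → V → ℝ)
    (hα : IsWeightFunction α) (hβ : IsWeightFunction β)
    (hαfull : ∀ u, 0 < marginal α u) (hβfull : ∀ v, 0 < marginal β v)
    (φG : U → L) (φH : V → L)
    (hρ : IsLeast {x : ℝ | ∃ γ' ∈ weightJoinings α β, x = ogjCost (labelCost φG φH) γ'} 0)
    (γ : U × V → U × V → ℝ)
    (hγ : γ ∈ weightJoinings α β)
    (hcost : ogjCost (labelCost φG φH) γ = 0)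
    (hbij : IsBijectiveJoining γ) :
    ∀ f : U → V, (∀ u : U, 0 < marginal γ (u, f u)) →
      Function.Bijective f ∧
      (∀ u u' : U, α u u' = β (f u) (f u')) ∧
      (∀ u : U, φG u = φH (f u)) :=
  bijective_optimal_joining_induces_isomorphism_general α β φG φH γ hγ hcost hbij
end
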